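/- arXiv:1409.3604 — 5 statements merged into one kernel-verified Lean document; each statement's English description precedes it below -/
import Mathlib

section
/- Let C be a monoidal category and let (D, Δ_D, ε_D) and (C', Δ_{C'}, ε_{C'}) be comonoid objects in C. Suppose λ : D ⊗ C' ⟶ C' ⊗ D is a distributive law, i.e. (suppressing associators and unitors) it satisfies: (I) (id_{C'} ⊗ Δ_D) ∘ λ = (λ ⊗ id_D) ∘ (id_D ⊗ λ) ∘ (Δ_D ⊗ id_{C'}); (II) (Δ_{C'} ⊗ id_D) ∘ λ = (id_{C'} ⊗ λ) ∘ (λ ⊗ id_{C'}) ∘ (id_D ⊗ Δ_{C'}); (i) (id_{C'} ⊗ ε_D) ∘ λ = ε_D ⊗ id_{C'} as morphisms D ⊗ C' ⟶ C'; (ii) (ε_{C'} ⊗ id_D) ∘ λ = id_D ⊗ ε_{C'} as morphisms D ⊗ C' ⟶ D. Then the object D ⊗ C' carries a comonoid structure with comultiplication Δ_λ := (id_D ⊗ λ ⊗ id_{C'}) ∘ (Δ_D ⊗ Δ_{C'}) : D ⊗ C' ⟶ (D ⊗ C') ⊗ (D ⊗ C') and counit ε_λ := ε_D ⊗ ε_{C'}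 : D ⊗ C' ⟶ 𝟙 (i.e. Δ_λ is coassociative and ε_λ is a two-sided counit for it). -/
open CategoryTheory MonoidalCategory

/-!
The counit laws hold because (i) and (ii) let the counit absorb the copy of `λ` in `Δ_λ`, after
which the counit laws of `D` and `E` apply. For coassociativity, both iterated comultiplications
reduce to the same normal form `tripleComul`: split `D` and `E` into three copies each, then move
every copy of `E` to the left of the copies of `D` following it by instances of `λ`. On one side
this uses (I) and coassociativity of `D`, on the other (II) and coassociativity of `E`; the
remaining difference is an interchange of two independent instances of `λ`.
-/

namespace CategoryTheory.ComonObj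

variable {C : Type*} [Category C] [MonoidalCategory C] (D E : C) [ComonObj D] [ComonObj E]

/-- The fields are the axioms (I), (II), (i), (ii) of a distributive law. -/
structure DistribLaw where
  hom : D ⊗ E ⟶ E ⊗ D
  hom_whiskerLeft_comul : hom ≫ (E ◁ Δ[D]) =
    (Δ[D] ▷ E) ≫ (α_ D D E).hom ≫ (D ◁ hom) ≫ (α_ D E D).inv ≫ (hom ▷ D) ≫ (α_ E D D).hom
  hom_comul_whiskerRight : hom ≫ (Δ[E] ▷ D) =
    (D ◁ Δ[E]) ≫ (α_ D E E).inv ≫ (hom ▷ E) ≫ (α_ E D E).hom ≫ (E ◁ hom) ≫ (α_ E E D).inv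
  hom_whiskerLeft_counit : hom ≫ (E ◁ ε[D]) ≫ (ρ_ E).hom = (ε[D] ▷ E) ≫ (λ_ E).hom
  hom_counit_whiskerRight : hom ≫ (ε[E] ▷ D) ≫ (λ_ D).hom = (D ◁ ε[E]) ≫ (ρ_ D).hom

def tensorCounit : D ⊗ E ⟶ 𝟙_ C :=
  (ε[D] ⊗ₘ ε[E]) ≫ (λ_ (𝟙_ C)).hom

namespace DistribLaw

variable {D E} (l : DistribLaw D E)

def tensorComul : D ⊗ E ⟶ (D ⊗ E) ⊗ (D ⊗ E) :=
  (Δ[D] ⊗ₘ Δ[E]) ≫ (α_ D D (E ⊗ E)).hom ≫ (D ◁ (α_ D E E).inv) ≫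
    (D ◁ (l.hom ▷ E)) ≫ (D ◁ (α_ E D E).hom) ≫ (α_ D E (D ⊗ E)).inv

theorem tensorCounit_tensorComul :
    l.tensorComul ≫ (tensorCounit D E ▷ (D ⊗ E)) = (λ_ (D ⊗ E)).inv :=
  calc _ = (Δ[D] ▷ E) ⊗≫ (D ◁ (D ◁ Δ[E])) ⊗≫
        (D ◁ ((l.hom ≫ (ε[E] ▷ D) ≫ (λ_ D).hom) ▷ E)) ⊗≫ (ε[D] ▷ (D ⊗ E)) ⊗≫
        𝟙 (𝟙_ C ⊗ (D ⊗ E)) := by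
        rw [tensorComul, tensorCounit, MonoidalCategory.tensorHom_def Δ[D] Δ[E],
          MonoidalCategory.tensorHom_def' ε[D] ε[E]]
        monoidal
    _ = (Δ[D] ▷ E) ⊗≫ (D ◁ (D ◁ (Δ[E] ≫ (ε[E] ▷ E)))) ⊗≫ (ε[D] ▷ (D ⊗ E)) ⊗≫
        𝟙 (𝟙_ C ⊗ (D ⊗ E)) := by rw [l.hom_counit_whiskerRight]; monoidal
    _ = ((Δ[D] ≫ (ε[D] ▷ D)) ▷ E) ⊗≫ 𝟙 (𝟙_ C ⊗ (D ⊗ E)) := by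
        rw [counit_comul]; monoidal
    _ = (λ_ (D ⊗ E)).inv := by rw [counit_comul]; monoidal

theorem tensorComul_tensorCounit :
    l.tensorComul ≫ ((D ⊗ E) ◁ tensorCounit D E) = (ρ_ (D ⊗ E)).inv :=
  calc _ = (D ◁ Δ[E]) ⊗≫ (Δ[D] ▷ (E ⊗ E)) ⊗≫
        (D ◁ ((l.hom ≫ (E ◁ ε[D]) ≫ (ρ_ E).hom) ▷ E)) ⊗≫ (D ◁ (E ◁ ε[E])) ⊗≫
        𝟙 ((D ⊗ E) ⊗ 𝟙_ C) := by
        rw [tensorComul, tensorCounit, MonoidalCategory.tensorHom_def' Δ[D] Δ[E],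
          MonoidalCategory.tensorHom_def ε[D] ε[E]]
        monoidal
    _ = (D ◁ Δ[E]) ⊗≫ ((Δ[D] ≫ (D ◁ ε[D])) ▷ (E ⊗ E)) ⊗≫ (D ◁ (E ◁ ε[E])) ⊗≫
        𝟙 ((D ⊗ E) ⊗ 𝟙_ C) := by rw [l.hom_whiskerLeft_counit]; monoidal
    _ = (D ◁ (Δ[E] ≫ (E ◁ ε[E]))) ⊗≫ 𝟙 ((D ⊗ E) ⊗ 𝟙_ C) := by
        rw [comul_counit]; monoidal
    _ = (ρ_ (D ⊗ E)).inv := by rw [comul_counit]; monoidal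

def tripleComul : D ⊗ E ⟶ (D ⊗ E) ⊗ (D ⊗ E) ⊗ (D ⊗ E) :=
  ((Δ[D] ≫ (Δ[D] ▷ D)) ▷ E) ⊗≫ (((D ⊗ D) ⊗ D) ◁ (Δ[E] ≫ (E ◁ Δ[E]))) ⊗≫
    (D ◁ (((D ◁ l.hom) ≫ (α_ D E D).inv ≫ (l.hom ▷ D)) ▷ (E ⊗ E))) ⊗≫
    (D ◁ ((E ⊗ D) ◁ (l.hom ▷ E))) ⊗≫ 𝟙 ((D ⊗ E) ⊗ (D ⊗ E) ⊗ (D ⊗ E))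

theorem tensorComul_whiskerLeft_tensorComul :
    l.tensorComul ≫ ((D ⊗ E) ◁ l.tensorComul) = l.tripleComul :=
  calc _ = (Δ[D] ▷ E) ⊗≫ ((D ⊗ D) ◁ Δ[E]) ⊗≫ (D ◁ ((l.hom ≫ (E ◁ Δ[D])) ▷ E)) ⊗≫
        (D ◁ (E ◁ ((D ⊗ D) ◁ Δ[E]))) ⊗≫ (D ◁ (E ◁ (D ◁ (l.hom ▷ E)))) ⊗≫
        𝟙 ((D ⊗ E) ⊗ (D ⊗ E) ⊗ (D ⊗ E)) := by
        simp only [tensorComul, MonoidalCategory.tensorHom_def]; monoidal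
    _ = (Δ[D] ▷ E) ⊗≫ (((D ⊗ D) ◁ Δ[E]) ≫ ((D ◁ Δ[D]) ▷ (E ⊗ E))) ⊗≫
        (D ◁ (((D ◁ l.hom) ≫ (α_ D E D).inv ≫ (l.hom ▷ D)) ▷ E)) ⊗≫
        (D ◁ (E ◁ ((D ⊗ D) ◁ Δ[E]))) ⊗≫ (D ◁ (E ◁ (D ◁ (l.hom ▷ E)))) ⊗≫
        𝟙 ((D ⊗ E) ⊗ (D ⊗ E) ⊗ (D ⊗ E)) := by
        rw [l.hom_whiskerLeft_comul]; monoidal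
    _ = ((Δ[D] ≫ (D ◁ Δ[D])) ▷ E) ⊗≫ ((D ⊗ (D ⊗ D)) ◁ Δ[E]) ⊗≫
        (D ◁ ((((D ◁ l.hom) ≫ (α_ D E D).inv ≫ (l.hom ▷ D)) ▷ E) ≫
          (((E ⊗ D) ⊗ D) ◁ Δ[E]))) ⊗≫ (D ◁ (E ◁ (D ◁ (l.hom ▷ E)))) ⊗≫
        𝟙 ((D ⊗ E) ⊗ (D ⊗ E) ⊗ (D ⊗ E)) := by
        rw [whisker_exchange (D ◁ Δ[D]) Δ[E]]; monoidal
    _ = ((Δ[D] ≫ (Δ[D] ▷ D)) ▷ E) ⊗≫ (((D ⊗ D) ⊗ D) ◁ Δ[E]) ⊗≫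
        (D ◁ (((D ⊗ (D ⊗ E)) ◁ Δ[E]) ≫
          (((D ◁ l.hom) ≫ (α_ D E D).inv ≫ (l.hom ▷ D)) ▷ (E ⊗ E)))) ⊗≫
        (D ◁ ((E ⊗ D) ◁ (l.hom ▷ E))) ⊗≫ 𝟙 ((D ⊗ E) ⊗ (D ⊗ E) ⊗ (D ⊗ E)) := by
        rw [comul_assoc, ← whisker_exchange ((D ◁ l.hom) ≫ (α_ D E D).inv ≫ (l.hom ▷ D)) Δ[E]]
        monoidal
    _ = l.tripleComul := by rw [tripleComul]; monoidal

theorem tensorComul_whiskerRight_tensorComul :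
    l.tensorComul ≫ (l.tensorComul ▷ (D ⊗ E)) ≫ (α_ (D ⊗ E) (D ⊗ E) (D ⊗ E)).hom =
      l.tripleComul :=
  calc _ = (Δ[D] ▷ E) ⊗≫ ((D ⊗ D) ◁ Δ[E]) ⊗≫ ((D ◁ (l.hom ▷ E)) ≫ (Δ[D] ▷ ((E ⊗ D) ⊗ E))) ⊗≫
        ((D ⊗ D) ◁ ((Δ[E] ▷ D) ▷ E)) ⊗≫ (D ◁ (l.hom ▷ (E ⊗ (D ⊗ E)))) ⊗≫
        𝟙 ((D ⊗ E) ⊗ (D ⊗ E) ⊗ (D ⊗ E)) := by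
        simp only [tensorComul, MonoidalCategory.tensorHom_def]; monoidal
    _ = (Δ[D] ▷ E) ⊗≫ ((D ⊗ D) ◁ Δ[E]) ⊗≫ (Δ[D] ▷ ((D ⊗ E) ⊗ E)) ⊗≫
        ((D ⊗ D) ◁ ((l.hom ≫ (Δ[E] ▷ D)) ▷ E)) ⊗≫ (D ◁ (l.hom ▷ (E ⊗ (D ⊗ E)))) ⊗≫
        𝟙 ((D ⊗ E) ⊗ (D ⊗ E) ⊗ (D ⊗ E)) := by
        rw [whisker_exchange Δ[D] (l.hom ▷ E)]; monoidal
    _ = (Δ[D] ▷ E) ⊗≫ (((D ⊗ D) ◁ Δ[E]) ≫ ((Δ[D] ▷ D) ▷ (E ⊗ E))) ⊗≫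
        (((D ⊗ D) ⊗ D) ◁ (Δ[E] ▷ E)) ⊗≫ ((D ⊗ D) ◁ (l.hom ▷ (E ⊗ E))) ⊗≫
        (((D ⊗ D) ⊗ E) ◁ (l.hom ▷ E)) ⊗≫ (D ◁ (l.hom ▷ (E ⊗ (D ⊗ E)))) ⊗≫
        𝟙 ((D ⊗ E) ⊗ (D ⊗ E) ⊗ (D ⊗ E)) := by
        rw [l.hom_comul_whiskerRight]; monoidal
    _ = ((Δ[D] ≫ (Δ[D] ▷ D)) ▷ E) ⊗≫
        (((D ⊗ D) ⊗ D) ◁ (Δ[E] ≫ (Δ[E] ▷ E) ≫ (α_ E E E).hom)) ⊗≫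
        ((D ⊗ D) ◁ (l.hom ▷ (E ⊗ E))) ⊗≫ (((D ⊗ D) ⊗ E) ◁ (l.hom ▷ E)) ⊗≫
        (D ◁ (l.hom ▷ (E ⊗ (D ⊗ E)))) ⊗≫ 𝟙 ((D ⊗ E) ⊗ (D ⊗ E) ⊗ (D ⊗ E)) := by
        rw [whisker_exchange (Δ[D] ▷ D) Δ[E]]; monoidal
    _ = ((Δ[D] ≫ (Δ[D] ▷ D)) ▷ E) ⊗≫ (((D ⊗ D) ⊗ D) ◁ (Δ[E] ≫ (E ◁ Δ[E]))) ⊗≫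
        ((D ⊗ D) ◁ (l.hom ▷ (E ⊗ E))) ⊗≫
        (D ◁ (((D ⊗ E) ◁ (l.hom ▷ E)) ≫ (l.hom ▷ ((E ⊗ D) ⊗ E)))) ⊗≫
        𝟙 ((D ⊗ E) ⊗ (D ⊗ E) ⊗ (D ⊗ E)) := by
        rw [← comul_assoc]; monoidal
    _ = l.tripleComul := by rw [tripleComul, whisker_exchange l.hom (l.hom ▷ E)]; monoidal

abbrev tensorComonObj : ComonObj (D ⊗ E) where
  comul := l.tensorComul
  counit := tensorCounit D E
  counit_comul := l.tensorCounit_tensorComul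
  comul_counit := l.tensorComul_tensorCounit
  comul_assoc := by
    rw [l.tensorComul_whiskerLeft_tensorComul, l.tensorComul_whiskerRight_tensorComul]

end DistribLaw
end CategoryTheory.ComonObj

/-- **Distributive law for comonoids.** If `D` and `C'` are comonoid objects in a monoidal
category `C` and `l : D ⊗ C' ⟶ C' ⊗ D` is a distributive law (satisfying the pentagon-type
compatibilities (I), (II) with the comultiplications and (i), (ii) with the counits), then
`D ⊗ C'` is again a comonoid object with comultiplication
`Δ_λ = (id_D ⊗ l ⊗ id_{C'}) ∘ (Δ_D ⊗ Δ_{C'})` and counit `ε_λ = ε_D ⊗ ε_{C'}`. -/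
theorem comon_distributive_law {C : Type*} [Category C] [MonoidalCategory C]
    (D C' : C)
    (ΔD : D ⟶ D ⊗ D) (εD : D ⟶ 𝟙_ C) (ΔC : C' ⟶ C' ⊗ C') (εC : C' ⟶ 𝟙_ C)
    (hD_counit₁ : ΔD ≫ (εD ▷ D) = (λ_ D).inv)
    (hD_counit₂ : ΔD ≫ (D ◁ εD) = (ρ_ D).inv)
    (hD_coassoc : ΔD ≫ (D ◁ ΔD) = ΔD ≫ (ΔD ▷ D) ≫ (α_ D D D).hom)
    (hC_counit₁ : ΔC ≫ (εC ▷ C') = (λ_ C').inv)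
    (hC_counit₂ : ΔC ≫ (C' ◁ εC) = (ρ_ C').inv)
    (hC_coassoc : ΔC ≫ (C' ◁ ΔC) = ΔC ≫ (ΔC ▷ C') ≫ (α_ C' C' C').hom)
    (l : D ⊗ C' ⟶ C' ⊗ D)
    (hI : l ≫ (C' ◁ ΔD) =
      (ΔD ▷ C') ≫ (α_ D D C').hom ≫ (D ◁ l) ≫ (α_ D C' D).inv ≫ (l ▷ D) ≫ (α_ C' D D).hom)
    (hII : l ≫ (ΔC ▷ D) =
      (D ◁ ΔC) ≫ (α_ D C' C').inv ≫ (l ▷ C') ≫ (α_ C' D C').hom ≫ (C' ◁ l) ≫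
        (α_ C' C' D).inv)
    (hi : l ≫ (C' ◁ εD) ≫ (ρ_ C').hom = (εD ▷ C') ≫ (λ_ C').hom)
    (hii : l ≫ (εC ▷ D) ≫ (λ_ D).hom = (D ◁ εC) ≫ (ρ_ D).hom)
    (Δl : D ⊗ C' ⟶ (D ⊗ C') ⊗ (D ⊗ C'))
    (hΔl : Δl = (ΔD ⊗ₘ ΔC) ≫ (α_ D D (C' ⊗ C')).hom ≫ (D ◁ (α_ D C' C').inv) ≫
      (D ◁ (l ▷ C')) ≫ (D ◁ (α_ C' D C').hom) ≫ (α_ D C' (D ⊗ C')).inv)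
    (εl : D ⊗ C' ⟶ 𝟙_ C)
    (hεl : εl = (εD ⊗ₘ εC) ≫ (λ_ (𝟙_ C)).hom) :
    (Δl ≫ (εl ▷ (D ⊗ C')) = (λ_ (D ⊗ C')).inv) ∧
    (Δl ≫ ((D ⊗ C') ◁ εl) = (ρ_ (D ⊗ C')).inv) ∧
    (Δl ≫ ((D ⊗ C') ◁ Δl) =
      Δl ≫ (Δl ▷ (D ⊗ C')) ≫ (α_ (D ⊗ C') (D ⊗ C') (D ⊗ C')).hom) := by
  let _ : ComonObj D := ⟨εD, ΔD, hD_counit₁, hD_counit₂, hD_coassoc⟩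
  let _ : ComonObj C' := ⟨εC, ΔC, hC_counit₁, hC_counit₂, hC_coassoc⟩
  let _ : ComonObj (D ⊗ C') := (ComonObj.DistribLaw.mk l hI hII hi hii).tensorComonObj
  subst hΔl hεl
  exact ⟨ComonObj.counit_comul (D ⊗ C'), ComonObj.comul_counit (D ⊗ C'),
    ComonObj.comul_assoc (D ⊗ C')⟩
end

section
/- Let n ≥ 1 and k : Fin n → ℕ, and set N := ∑_{i} k(i). For every natural number κ with 0 ≤ κ ≤ N one has the identity of integers α(k) = ∑_{k'} (−1)^{∑_{i} (k(i) − k'(i)) · (∑_{j > i} k'(j))} · α(k') · α(k − k'), where the sum ranges over all k' : Fin n → ℕ with k'(i) ≤ k(i) for all i and ∑_i k'(i) = κ, and k − k' denotes the pointwise difference. -/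
open scoped Classical

/-- The start of the `i`-th consecutive block of sizes `k 0, k 1, …`:
`blockStart k i = ∑_{j < i} k j`. -/
def blockStart {n : ℕ} (k : Fin n → ℕ) (i : Fin n) : ℕ :=
  ∑ j ∈ Finset.univ.filter (fun j => j < i), k j

/-- `σ` is a `(k 0, …, k (n-1))`-shuffle: it is strictly increasing on each consecutive
block `B_i = {x | blockStart k i ≤ x < blockStart k i + k i}`. -/
def IsShuffle {n N : ℕ} (k : Fin n → ℕ) (σ : Equiv.Perm (Fin N)) : Prop :=
  ∀ (i : Fin n) (x y : Fin N),
    blockStart k i ≤ (x : ℕ) → (x : ℕ) < (y : ℕ) → (y : ℕ) < blockStart k i + k i →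
      σ x < σ y

/-- The signed count of `k`-shuffles: `α(k) = ∑_{σ a k-shuffle} sgn σ`. -/
noncomputable def shuffleAlpha {n : ℕ} (k : Fin n → ℕ) : ℤ :=
  ∑ σ : Equiv.Perm (Fin (∑ i, k i)),
    if IsShuffle k σ then ((Equiv.Perm.sign σ : ℤˣ) : ℤ) else 0

namespace ShuffleProof
open Finset Equiv Equiv.Perm

variable {n : ℕ}

lemma blockStart_add_le {k : Fin n → ℕ} {i j : Fin n} (h : i < j) :
    blockStart k i + k i ≤ blockStart k j := by
  have hsub : insert i (Finset.univ.filter (fun l => l < i)) ⊆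
      Finset.univ.filter (fun l : Fin n => l < j) := by
    intro l hl
    simp only [Finset.mem_insert, Finset.mem_filter, Finset.mem_univ, true_and] at hl ⊢
    rcases hl with rfl | hl
    · exact h
    · exact hl.trans h
  have hi : i ∉ Finset.univ.filter (fun l : Fin n => l < i) := by simp
  calc blockStart k i + k i
      = ∑ l ∈ insert i (Finset.univ.filter (fun l => l < i)), k l := by
        rw [Finset.sum_insert hi, add_comm]; rfl
    _ ≤ _ := Finset.sum_le_sum_of_subset hsub

lemma blockStart_add_le_sum {k : Fin n → ℕ} (i : Fin n) :
    blockStart k i + k i ≤ ∑ l, k l := by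
  have hi : i ∉ Finset.univ.filter (fun l : Fin n => l < i) := by simp
  calc blockStart k i + k i
      = ∑ l ∈ insert i (Finset.univ.filter (fun l => l < i)), k l := by
        rw [Finset.sum_insert hi, add_comm]; rfl
    _ ≤ _ := Finset.sum_le_sum_of_subset (fun l _ => Finset.mem_univ l)

lemma blockStart_add_lt_sum {k : Fin n → ℕ} {i : Fin n} {t : ℕ} (ht : t < k i) :
    blockStart k i + t < ∑ l, k l :=
  lt_of_lt_of_le (by omega) (blockStart_add_le_sum (k := k) i)

/-- The canonical equivalence between the sigma type of blocks and `Fin (∑ k i)`. -/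
noncomputable def blockE (k : Fin n → ℕ) : (Σ i : Fin n, Fin (k i)) ≃ Fin (∑ i, k i) :=
  Equiv.ofBijective (fun a => ⟨blockStart k a.1 + a.2, blockStart_add_lt_sum a.2.2⟩) <| by
    rw [Fintype.bijective_iff_injective_and_card]
    constructor
    · rintro ⟨a1, a2⟩ ⟨b1, b2⟩ hab
      have hv : blockStart k a1 + (a2 : ℕ) = blockStart k b1 + (b2 : ℕ) :=
        congrArg Fin.val hab
      rcases lt_trichotomy a1 b1 with h | h | h
      · refine absurd hv ?_
        have h1 := blockStart_add_le (k := k) h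
        have h2 := a2.2
        omega
      · subst h
        exact congrArg (Sigma.mk a1) (Fin.ext (by omega))
      · refine absurd hv ?_
        have h1 := blockStart_add_le (k := k) h
        have h2 := b2.2
        omega
    · simp [Fintype.card_sigma, Fintype.card_fin]

lemma blockE_val {k : Fin n → ℕ} (a : Σ i : Fin n, Fin (k i)) :
    (blockE k a : ℕ) = blockStart k a.1 + a.2 := rfl

lemma blockE_lt_of_lt {k : Fin n → ℕ} {i j : Fin n} (h : i < j) (t : Fin (k i)) (u : Fin (k j)) :
    (blockE k ⟨i, t⟩ : ℕ) < (blockE k ⟨j, u⟩ : ℕ) := by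
  have := blockStart_add_le (k := k) h
  simp only [blockE_val]
  omega

lemma card_filter_val_lt {m c : ℕ} (h : c ≤ m) :
    (Finset.univ.filter (fun t : Fin m => (t : ℕ) < c)).card = c := by
  have : Finset.univ.filter (fun t : Fin m => (t : ℕ) < c)
      = Finset.map (Fin.castLEOrderEmb h).toEmbedding Finset.univ := by
    ext x
    simp only [Finset.mem_filter, Finset.mem_univ, true_and, Finset.mem_map]
    constructor
    · intro hx
      refine ⟨⟨(x : ℕ), hx⟩, ?_⟩
      exact Fin.ext rfl
    · rintro ⟨y, rfl⟩
      exact y.2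
  rw [this, Finset.card_map, Finset.card_univ, Fintype.card_fin]

lemma mem_lowerSet_iff {m : ℕ} (S : Finset (Fin m))
    (hS : ∀ u t : Fin m, u ≤ t → t ∈ S → u ∈ S) (t : Fin m) :
    t ∈ S ↔ (t : ℕ) < S.card := by
  constructor
  · intro ht
    have hsub : Finset.univ.filter (fun u : Fin m => (u : ℕ) < (t : ℕ) + 1) ⊆ S := by
      intro u hu
      simp only [Finset.mem_filter, Finset.mem_univ, true_and] at hu
      exact hS u t (by omega) ht
    have := Finset.card_le_card hsub
    rwa [card_filter_val_lt (by omega)] at this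
  · intro h
    by_contra ht
    have hsub : S ⊆ Finset.univ.filter (fun u : Fin m => (u : ℕ) < (t : ℕ)) := by
      intro u hu
      simp only [Finset.mem_filter, Finset.mem_univ, true_and]
      by_contra hc
      exact ht (hS t u (by omega) hu)
    have := Finset.card_le_card hsub
    rw [card_filter_val_lt (le_of_lt t.2)] at this
    omega


section Decomp

variable (k g : Fin n → ℕ)

lemma sum_sub_add (hg : ∀ i, g i ≤ k i) :
    (∑ i, g i) + (∑ i, (k i - g i)) = ∑ i, k i := by
  rw [← Finset.sum_add_distrib]
  exact Finset.sum_congr rfl fun i _ => by have := hg i; omega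

/-- Split each block `Fin (k i)` into its initial `g i` part and its tail. -/
def splitE (hg : ∀ i, g i ≤ k i) :
    (Σ i : Fin n, Fin (k i)) ≃ (Σ i : Fin n, Fin (g i)) ⊕ (Σ i : Fin n, Fin (k i - g i)) where
  toFun a := if h : (a.2 : ℕ) < g a.1 then Sum.inl ⟨a.1, ⟨a.2, h⟩⟩
    else Sum.inr ⟨a.1, ⟨(a.2 : ℕ) - g a.1, by have := a.2.2; omega⟩⟩
  invFun x := match x with
    | Sum.inl a => ⟨a.1, ⟨a.2, lt_of_lt_of_le a.2.2 (hg a.1)⟩⟩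
    | Sum.inr a => ⟨a.1, ⟨g a.1 + a.2, by have := a.2.2; omega⟩⟩
  left_inv := by
    rintro ⟨i, t⟩
    dsimp only
    split_ifs with h
    · rfl
    · exact congrArg (Sigma.mk i) (Fin.ext (by have := t.2; simp; omega))
  right_inv := by
    rintro (⟨i, t⟩ | ⟨i, t⟩) <;> dsimp only <;> split_ifs with h
    · exact congrArg Sum.inl (congrArg (Sigma.mk i) (Fin.ext rfl))
    · exact absurd t.2 h
    · exact absurd h (by simp)
    · exact congrArg Sum.inr (congrArg (Sigma.mk i) (Fin.ext (by simp)))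

/-- The "unshuffle": sends each element of `Fin (∑ k i)` to its position in the initial part or
the tail part. -/
noncomputable def unshuffle (hg : ∀ i, g i ≤ k i) :
    Fin (∑ i, k i) ≃ Fin (∑ i, g i) ⊕ Fin (∑ i, (k i - g i)) :=
  (blockE k).symm.trans ((splitE k g hg).trans
    (Equiv.sumCongr (blockE g) (blockE (fun i => k i - g i))))

/-- The order-preserving merge of `Fin A ⊕ Fin B` into `Fin (∑ k i)`. -/
noncomputable def mergeE (hg : ∀ i, g i ≤ k i) :
    (Fin (∑ i, g i) ⊕ Fin (∑ i, (k i - g i))) ≃ Fin (∑ i, k i) :=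
  finSumFinEquiv.trans (finCongr (sum_sub_add k g hg))

lemma mergeE_inl (hg : ∀ i, g i ≤ k i) (u : Fin (∑ i, g i)) :
    (mergeE k g hg (Sum.inl u) : ℕ) = (u : ℕ) := by
  simp [mergeE]

lemma mergeE_inr (hg : ∀ i, g i ≤ k i) (v : Fin (∑ i, (k i - g i))) :
    (mergeE k g hg (Sum.inr v) : ℕ) = (∑ i, g i) + (v : ℕ) := by
  simp [mergeE]

lemma unshuffle_init (hg : ∀ i, g i ≤ k i) (i : Fin n) (t : Fin (k i)) (h : (t : ℕ) < g i) :
    unshuffle k g hg (blockE k ⟨i, t⟩) = Sum.inl (blockE g ⟨i, ⟨t, h⟩⟩) := by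
  simp only [unshuffle, Equiv.trans_apply, Equiv.symm_apply_apply]
  rw [show splitE k g hg ⟨i, t⟩ = Sum.inl ⟨i, ⟨t, h⟩⟩ from dif_pos h]
  rfl

lemma unshuffle_tail (hg : ∀ i, g i ≤ k i) (i : Fin n) (t : Fin (k i)) (h : ¬ (t : ℕ) < g i) :
    unshuffle k g hg (blockE k ⟨i, t⟩) =
      Sum.inr (blockE (fun i => k i - g i) ⟨i, ⟨(t : ℕ) - g i, by have := t.2; omega⟩⟩) := by
  simp only [unshuffle, Equiv.trans_apply, Equiv.symm_apply_apply]
  rw [show splitE k g hg ⟨i, t⟩ = Sum.inr ⟨i, ⟨(t : ℕ) - g i, _⟩⟩ from dif_neg h]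
  rfl

/-- The fixed "block unshuffle" permutation. -/
noncomputable def piPerm (hg : ∀ i, g i ≤ k i) : Equiv.Perm (Fin (∑ i, k i)) :=
  (unshuffle k g hg).trans (mergeE k g hg)

/-- Building a permutation of `Fin (∑ k i)` from permutations of the two parts. -/
noncomputable def Phi (hg : ∀ i, g i ≤ k i) (σ₁ : Equiv.Perm (Fin (∑ i, g i)))
    (σ₂ : Equiv.Perm (Fin (∑ i, (k i - g i)))) : Equiv.Perm (Fin (∑ i, k i)) :=
  (unshuffle k g hg).trans ((Equiv.sumCongr σ₁ σ₂).trans (mergeE k g hg))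

lemma Phi_init (hg : ∀ i, g i ≤ k i) (σ₁ : Equiv.Perm (Fin (∑ i, g i)))
    (σ₂ : Equiv.Perm (Fin (∑ i, (k i - g i)))) (i : Fin n) (t : Fin (k i)) (h : (t : ℕ) < g i) :
    (Phi k g hg σ₁ σ₂ (blockE k ⟨i, t⟩) : ℕ) = (σ₁ (blockE g ⟨i, ⟨t, h⟩⟩) : ℕ) := by
  simp only [Phi, Equiv.trans_apply, unshuffle_init k g hg i t h, Equiv.sumCongr_apply,
    Sum.map_inl, mergeE_inl]

lemma Phi_tail (hg : ∀ i, g i ≤ k i) (σ₁ : Equiv.Perm (Fin (∑ i, g i)))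
    (σ₂ : Equiv.Perm (Fin (∑ i, (k i - g i)))) (i : Fin n) (t : Fin (k i)) (h : ¬ (t : ℕ) < g i) :
    (Phi k g hg σ₁ σ₂ (blockE k ⟨i, t⟩) : ℕ) =
      (∑ i, g i) +
        (σ₂ (blockE (fun i => k i - g i) ⟨i, ⟨(t : ℕ) - g i, by have := t.2; omega⟩⟩) : ℕ) := by
  simp only [Phi, Equiv.trans_apply, unshuffle_tail k g hg i t h, Equiv.sumCongr_apply,
    Sum.map_inr, mergeE_inr]

lemma sign_Phi (hg : ∀ i, g i ≤ k i) (σ₁ : Equiv.Perm (Fin (∑ i, g i)))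
    (σ₂ : Equiv.Perm (Fin (∑ i, (k i - g i)))) :
    Equiv.Perm.sign (Phi k g hg σ₁ σ₂) =
      Equiv.Perm.sign σ₁ * Equiv.Perm.sign σ₂ * Equiv.Perm.sign (piPerm k g hg) := by
  have hdecomp : Phi k g hg σ₁ σ₂ =
      ((unshuffle k g hg).trans ((Equiv.sumCongr σ₁ σ₂).trans (unshuffle k g hg).symm)).trans
        (piPerm k g hg) := by
    ext x
    simp [Phi, piPerm]
  rw [hdecomp, Equiv.Perm.sign_trans]
  have : (unshuffle k g hg).trans ((Equiv.sumCongr σ₁ σ₂).trans (unshuffle k g hg).symm) =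
      (((unshuffle k g hg).symm.symm.trans (Equiv.sumCongr σ₁ σ₂)).trans
        (unshuffle k g hg).symm) := by
    ext x; simp
  rw [this, Equiv.Perm.sign_symm_trans_trans, Equiv.Perm.sign_sumCongr]
  exact mul_comm _ _

end Decomp

section Sign

lemma sign_eq_signAux {m : ℕ} (σ : Equiv.Perm (Fin m)) :
    Equiv.Perm.sign σ = Equiv.Perm.signAux σ := by
  refine Equiv.Perm.swap_induction_on σ ?_ ?_
  · rw [Equiv.Perm.sign_one, Equiv.Perm.signAux_one]
  · intro f x y hxy ih
    rw [Equiv.Perm.sign_mul, Equiv.Perm.signAux_mul, Equiv.Perm.sign_swap hxy,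
      Equiv.Perm.signAux_swap hxy, ih]

lemma finPairsLT_eq (m : ℕ) :
    Equiv.Perm.finPairsLT m
      = Finset.univ.filter (fun x : Σ _ : Fin m, Fin m => x.2 < x.1) := by
  ext x
  simp [Equiv.Perm.mem_finPairsLT]

lemma sign_eq_pow_count {m : ℕ} (σ : Equiv.Perm (Fin m)) :
    Equiv.Perm.sign σ =
      (-1 : ℤˣ) ^ (∑ x : Σ _ : Fin m, Fin m,
        if x.2 < x.1 ∧ σ x.1 ≤ σ x.2 then 1 else 0) := by
  rw [sign_eq_signAux]
  unfold Equiv.Perm.signAux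
  rw [finPairsLT_eq, Finset.prod_filter, ← Finset.prod_pow_eq_pow_sum]
  refine Finset.prod_congr rfl fun x _ => ?_
  by_cases h1 : x.2 < x.1 <;> by_cases h2 : σ x.1 ≤ σ x.2 <;> simp [h1, h2]

lemma blockE_mk_val {k : Fin n → ℕ} (i : Fin n) (t : Fin (k i)) :
    (blockE k ⟨i, t⟩ : ℕ) = blockStart k i + (t : ℕ) := rfl

lemma blockStart_lt_iff {k : Fin n → ℕ} {i j : Fin n} {t u : ℕ} (ht : t < k i) (hu : u < k j) :
    blockStart k j + u < blockStart k i + t ↔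
      ((j : ℕ) < (i : ℕ) ∨ ((j : ℕ) = (i : ℕ) ∧ u < t)) := by
  rcases lt_trichotomy (j : ℕ) (i : ℕ) with h | h | h
  · have h1 := blockStart_add_le (k := k) (Fin.lt_def.mpr h)
    constructor
    · intro _; exact Or.inl h
    · intro _; omega
  · have h' : j = i := Fin.ext h
    subst h'
    constructor
    · intro hlt; exact Or.inr ⟨rfl, by omega⟩
    · rintro (h2 | ⟨-, h2⟩) <;> omega
  · have h1 := blockStart_add_le (k := k) (Fin.lt_def.mpr h)
    constructor
    · intro hlt; exfalso; omega
    · rintro (h2 | ⟨h2, -⟩) <;> omega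

section Sigma

variable (k g : Fin n → ℕ)

lemma piPerm_init (hg : ∀ i, g i ≤ k i) (i : Fin n) (t : Fin (k i)) (h : (t : ℕ) < g i) :
    (piPerm k g hg (blockE k ⟨i, t⟩) : ℕ) = blockStart g i + (t : ℕ) := by
  simp only [piPerm, Equiv.trans_apply, unshuffle_init k g hg i t h, mergeE_inl]
  rfl

lemma piPerm_tail (hg : ∀ i, g i ≤ k i) (i : Fin n) (t : Fin (k i)) (h : ¬ (t : ℕ) < g i) :
    (piPerm k g hg (blockE k ⟨i, t⟩) : ℕ) =
      (∑ i, g i) + (blockStart (fun i => k i - g i) i + ((t : ℕ) - g i)) := by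
  simp only [piPerm, Equiv.trans_apply, unshuffle_tail k g hg i t h, mergeE_inr]
  rfl

lemma piPerm_cond_iff (hg : ∀ i, g i ≤ k i) (i j : Fin n) (t : Fin (k i)) (u : Fin (k j)) :
    (blockE k ⟨j, u⟩ < blockE k ⟨i, t⟩ ∧
        piPerm k g hg (blockE k ⟨i, t⟩) ≤ piPerm k g hg (blockE k ⟨j, u⟩)) ↔
      ((j : ℕ) < (i : ℕ) ∧ (t : ℕ) < g i ∧ g j ≤ (u : ℕ)) := by
  rw [Fin.lt_def, Fin.le_def, blockE_mk_val, blockE_mk_val, blockStart_lt_iff t.2 u.2]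
  by_cases ha : (t : ℕ) < g i <;> by_cases hb : (u : ℕ) < g j
  · rw [piPerm_init k g hg i t ha, piPerm_init k g hg j u hb]
    have hiff := blockStart_lt_iff (k := g) ha hb
    constructor
    · rintro ⟨hlex, hle⟩
      exfalso
      have := hiff.mpr hlex
      omega
    · rintro ⟨-, -, hgb⟩
      omega
  · rw [piPerm_init k g hg i t ha, piPerm_tail k g hg j u hb]
    have h1 : blockStart g i + (t : ℕ) < ∑ l, g l := blockStart_add_lt_sum ha
    constructor
    · rintro ⟨hlex, -⟩
      refine ⟨?_, ha, by omega⟩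
      rcases hlex with h | ⟨h, h2⟩
      · exact h
      · exfalso
        have hji : j = i := Fin.ext h
        subst hji
        omega
    · rintro ⟨hj, -, -⟩
      exact ⟨Or.inl hj, by omega⟩
  · rw [piPerm_tail k g hg i t ha, piPerm_init k g hg j u hb]
    have h1 : blockStart g j + (u : ℕ) < ∑ l, g l := blockStart_add_lt_sum hb
    constructor
    · rintro ⟨-, hle⟩
      exact absurd hle (by omega)
    · rintro ⟨-, h, -⟩
      omega
  · rw [piPerm_tail k g hg i t ha, piPerm_tail k g hg j u hb]
    have ht' : (t : ℕ) - g i < k i - g i := by have := t.2; omega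
    have hu' : (u : ℕ) - g j < k j - g j := by have := u.2; omega
    have hiff := blockStart_lt_iff (k := fun l => k l - g l) ht' hu'
    constructor
    · rintro ⟨hlex, hle⟩
      exfalso
      have : blockStart (fun l => k l - g l) j + ((u : ℕ) - g j) <
          blockStart (fun l => k l - g l) i + ((t : ℕ) - g i) := by
        rcases hlex with h | ⟨h, h2⟩
        · exact hiff.mpr (Or.inl h)
        · have hji : j = i := Fin.ext h
          subst hji
          exact hiff.mpr (Or.inr ⟨rfl, by omega⟩)
      omega
    · rintro ⟨-, h, -⟩
      omega

lemma sum_ite_lt {m c : ℕ} (h : c ≤ m) :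
    (∑ t : Fin m, if (t : ℕ) < c then 1 else 0) = c := by
  rw [← Finset.card_filter, card_filter_val_lt h]

lemma sum_ite_ge {m c : ℕ} (h : c ≤ m) :
    (∑ t : Fin m, if c ≤ (t : ℕ) then 1 else 0) = m - c := by
  have h1 : (∑ t : Fin m, if (t : ℕ) < c then 1 else 0)
      + (∑ t : Fin m, if c ≤ (t : ℕ) then 1 else 0) = m := by
    rw [← Finset.sum_add_distrib]
    have hpt : ∀ t : Fin m,
        ((if (t : ℕ) < c then 1 else 0) + if c ≤ (t : ℕ) then 1 else 0) = 1 := by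
      intro t
      by_cases h2 : (t : ℕ) < c
      · rw [if_pos h2, if_neg (by omega)]
      · rw [if_neg h2, if_pos (by omega)]
    rw [Finset.sum_congr rfl fun t _ => hpt t]
    simp
  rw [sum_ite_lt h] at h1
  omega

lemma sign_piPerm (hg : ∀ i, g i ≤ k i) :
    Equiv.Perm.sign (piPerm k g hg) =
      (-1 : ℤˣ) ^ (∑ i, (k i - g i) * (∑ j ∈ Finset.univ.filter (fun j => i < j), g j)) := by
  rw [sign_eq_pow_count]
  congr 1
  have hreindex :
      (∑ x : Σ _ : Fin (∑ i, k i), Fin (∑ i, k i),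
        if x.2 < x.1 ∧ piPerm k g hg x.1 ≤ piPerm k g hg x.2 then 1 else 0) =
      ∑ a : Σ i : Fin n, Fin (k i), ∑ b : Σ i : Fin n, Fin (k i),
        if blockE k b < blockE k a ∧
            piPerm k g hg (blockE k a) ≤ piPerm k g hg (blockE k b) then 1 else 0 := by
    rw [← Fintype.sum_prod_type']
    refine (Fintype.sum_equiv
      (((blockE k).prodCongr (blockE k)).trans
        (Equiv.sigmaEquivProd (Fin (∑ i, k i)) (Fin (∑ i, k i))).symm)
      _ _ fun p => rfl).symm
  rw [hreindex]
  calc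
    (∑ a : Σ i : Fin n, Fin (k i), ∑ b : Σ i : Fin n, Fin (k i),
        if blockE k b < blockE k a ∧
            piPerm k g hg (blockE k a) ≤ piPerm k g hg (blockE k b) then 1 else 0)
      = ∑ i : Fin n, ∑ t : Fin (k i), ∑ j : Fin n, ∑ u : Fin (k j),
          if (j : ℕ) < (i : ℕ) ∧ (t : ℕ) < g i ∧ g j ≤ (u : ℕ) then 1 else 0 := by
        rw [← Finset.univ_sigma_univ, Finset.sum_sigma]
        refine Finset.sum_congr rfl fun i _ => ?_
        refine Finset.sum_congr rfl fun t _ => ?_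
        rw [Finset.sum_sigma]
        refine Finset.sum_congr rfl fun j _ => ?_
        refine Finset.sum_congr rfl fun u _ => ?_
        rw [if_congr (piPerm_cond_iff k g hg i j t u) rfl rfl]
    _ = ∑ i : Fin n, ∑ t : Fin (k i),
          (if (t : ℕ) < g i then 1 else 0) *
            ∑ j : Fin n, ∑ u : Fin (k j),
              (if (j : ℕ) < (i : ℕ) then 1 else 0) * (if g j ≤ (u : ℕ) then 1 else 0) := by
        refine Finset.sum_congr rfl fun i _ => Finset.sum_congr rfl fun t _ => ?_
        rw [Finset.mul_sum]
        refine Finset.sum_congr rfl fun j _ => ?_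
        rw [Finset.mul_sum]
        refine Finset.sum_congr rfl fun u _ => ?_
        by_cases h1 : (j : ℕ) < (i : ℕ) <;> by_cases h2 : (t : ℕ) < g i <;>
          by_cases h3 : g j ≤ (u : ℕ) <;> simp [h1, h2, h3]
    _ = ∑ i : Fin n, g i * ∑ j ∈ Finset.univ.filter (fun j => j < i), (k j - g j) := by
        refine Finset.sum_congr rfl fun i _ => ?_
        have hinner : (∑ j : Fin n, ∑ u : Fin (k j),
            (if (j : ℕ) < (i : ℕ) then 1 else 0) * (if g j ≤ (u : ℕ) then 1 else 0)) =
            ∑ j ∈ Finset.univ.filter (fun j => j < i), (k j - g j) := by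
          have e1 : ∀ j : Fin n, (∑ u : Fin (k j),
              (if (j : ℕ) < (i : ℕ) then 1 else 0) * (if g j ≤ (u : ℕ) then 1 else 0)) =
              (if j < i then (k j - g j) else 0) := by
            intro j
            rw [← Finset.mul_sum, sum_ite_ge (hg j)]
            by_cases h1 : j < i
            · rw [if_pos h1, if_pos (Fin.lt_def.mp h1), one_mul]
            · rw [if_neg h1, if_neg (fun h => h1 (Fin.lt_def.mpr h)), zero_mul]
          rw [Finset.sum_congr rfl fun j _ => e1 j, ← Finset.sum_filter]
        rw [Finset.sum_congr rfl fun t _ => congrArg _ hinner]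
        rw [← Finset.sum_mul, sum_ite_lt (hg i)]
    _ = ∑ i : Fin n, (k i - g i) * (∑ j ∈ Finset.univ.filter (fun j => i < j), g j) := by
        have l1 : ∀ i : Fin n,
            g i * (∑ j ∈ Finset.univ.filter (fun j => j < i), (k j - g j)) =
            ∑ j : Fin n, (if j < i then g i * (k j - g j) else 0) := by
          intro i
          rw [Finset.mul_sum, ← Finset.sum_filter]
        have l2 : ∀ j : Fin n,
            (k j - g j) * (∑ i ∈ Finset.univ.filter (fun i => j < i), g i) =
            ∑ i : Fin n, (if j < i then g i * (k j - g j) else 0) := by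
          intro j
          calc (k j - g j) * (∑ i ∈ Finset.univ.filter (fun i => j < i), g i)
              = ∑ i ∈ Finset.univ.filter (fun i => j < i), (k j - g j) * g i :=
                Finset.mul_sum _ _ _
            _ = ∑ i ∈ Finset.univ.filter (fun i => j < i), g i * (k j - g j) :=
                Finset.sum_congr rfl fun i _ => mul_comm _ _
            _ = ∑ i : Fin n, (if j < i then g i * (k j - g j) else 0) :=
                Finset.sum_filter _ _
        rw [Finset.sum_congr rfl fun i _ => l1 i]
        rw [Finset.sum_comm]
        exact Finset.sum_congr rfl fun j _ => (l2 j).symm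

end Sigma

end Sign


section Correspondence

variable (k g : Fin n → ℕ)

lemma isShuffle_iff {N' : ℕ} (hN : N' = ∑ i, k i) (σ : Equiv.Perm (Fin N')) :
    IsShuffle k σ ↔ ∀ (i : Fin n) (t u : Fin (k i)), (t : ℕ) < (u : ℕ) →
      σ (Fin.cast hN.symm (blockE k ⟨i, t⟩)) < σ (Fin.cast hN.symm (blockE k ⟨i, u⟩)) := by
  subst hN
  constructor
  · intro hσ i t u htu
    refine hσ i _ _ ?_ ?_ ?_
    · simp [blockE_mk_val]
    · simpa [blockE_mk_val] using htu
    · have := u.2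
      simp only [Fin.coe_cast, blockE_mk_val]
      omega
  · intro hσ i x y hx hxy hy
    have hxk : (x : ℕ) - blockStart k i < k i := by omega
    have hyk : (y : ℕ) - blockStart k i < k i := by omega
    have hx' : x = Fin.cast rfl (blockE k ⟨i, ⟨(x : ℕ) - blockStart k i, hxk⟩⟩) :=
      Fin.ext (by simp [blockE_mk_val]; omega)
    have hy' : y = Fin.cast rfl (blockE k ⟨i, ⟨(y : ℕ) - blockStart k i, hyk⟩⟩) :=
      Fin.ext (by simp [blockE_mk_val]; omega)
    rw [hx', hy']
    exact hσ i ⟨(x : ℕ) - blockStart k i, hxk⟩ ⟨(y : ℕ) - blockStart k i, hyk⟩ (by simp; omega)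

lemma isShuffle_iff' (σ : Equiv.Perm (Fin (∑ i, k i))) :
    IsShuffle k σ ↔ ∀ (i : Fin n) (t u : Fin (k i)), (t : ℕ) < (u : ℕ) →
      σ (blockE k ⟨i, t⟩) < σ (blockE k ⟨i, u⟩) := by
  rw [isShuffle_iff k rfl σ]
  rfl

lemma Phi_isShuffle_iff (hg : ∀ i, g i ≤ k i) (σ₁ : Equiv.Perm (Fin (∑ i, g i)))
    (σ₂ : Equiv.Perm (Fin (∑ i, (k i - g i)))) :
    IsShuffle k (Phi k g hg σ₁ σ₂) ↔
      IsShuffle g σ₁ ∧ IsShuffle (fun i => k i - g i) σ₂ := by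
  rw [isShuffle_iff' k, isShuffle_iff' g, isShuffle_iff' (fun i => k i - g i)]
  constructor
  · intro hΦ
    constructor
    · intro i t u htu
      have ht' : (t : ℕ) < k i := lt_of_lt_of_le t.2 (hg i)
      have hu' : (u : ℕ) < k i := lt_of_lt_of_le u.2 (hg i)
      have h := hΦ i ⟨(t : ℕ), ht'⟩ ⟨(u : ℕ), hu'⟩ htu
      rw [Fin.lt_def] at h ⊢
      rw [Phi_init k g hg σ₁ σ₂ i ⟨(t : ℕ), ht'⟩ t.2, Phi_init k g hg σ₁ σ₂ i ⟨(u : ℕ), hu'⟩ u.2] at h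
      have e1 : (⟨((⟨(t : ℕ), ht'⟩ : Fin (k i)) : ℕ), t.2⟩ : Fin (g i)) = t := Fin.ext rfl
      have e2 : (⟨((⟨(u : ℕ), hu'⟩ : Fin (k i)) : ℕ), u.2⟩ : Fin (g i)) = u := Fin.ext rfl
      rwa [e1, e2] at h
    · intro i t u htu
      have ht' : g i + (t : ℕ) < k i := by have := t.2; omega
      have hu' : g i + (u : ℕ) < k i := by have := u.2; omega
      have hnt : ¬ ((⟨g i + (t : ℕ), ht'⟩ : Fin (k i)) : ℕ) < g i := by simp
      have hnu : ¬ ((⟨g i + (u : ℕ), hu'⟩ : Fin (k i)) : ℕ) < g i := by simp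
      have h := hΦ i ⟨g i + (t : ℕ), ht'⟩ ⟨g i + (u : ℕ), hu'⟩ (by simpa using htu)
      rw [Fin.lt_def] at h ⊢
      rw [Phi_tail k g hg σ₁ σ₂ i _ hnt, Phi_tail k g hg σ₁ σ₂ i _ hnu] at h
      simp only [add_tsub_cancel_left, Fin.eta] at h
      omega
  · rintro ⟨h1, h2⟩ i t u htu
    rw [Fin.lt_def]
    by_cases ht : (t : ℕ) < g i <;> by_cases hu : (u : ℕ) < g i
    · rw [Phi_init k g hg σ₁ σ₂ i t ht, Phi_init k g hg σ₁ σ₂ i u hu]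
      have := h1 i ⟨(t : ℕ), ht⟩ ⟨(u : ℕ), hu⟩ htu
      rw [Fin.lt_def] at this
      have e1 : (⟨(t : ℕ), ht⟩ : Fin (g i)) = ⟨(t : ℕ), ht⟩ := rfl
      exact this
    · rw [Phi_init k g hg σ₁ σ₂ i t ht, Phi_tail k g hg σ₁ σ₂ i u hu]
      have := (σ₁ (blockE g ⟨i, ⟨(t : ℕ), ht⟩⟩)).2
      omega
    · omega
    · rw [Phi_tail k g hg σ₁ σ₂ i t ht, Phi_tail k g hg σ₁ σ₂ i u hu]
      have := h2 i ⟨(t : ℕ) - g i, by have := t.2; omega⟩ ⟨(u : ℕ) - g i, by have := u.2; omega⟩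
        (by simp; omega)
      rw [Fin.lt_def] at this
      omega

lemma Phi_profile (hg : ∀ i, g i ≤ k i) (σ₁ : Equiv.Perm (Fin (∑ i, g i)))
    (σ₂ : Equiv.Perm (Fin (∑ i, (k i - g i)))) (i : Fin n) :
    (Finset.univ.filter
      (fun t : Fin (k i) => ((Phi k g hg σ₁ σ₂) (blockE k ⟨i, t⟩) : ℕ) < ∑ l, g l)).card
      = g i := by
  have hcong : Finset.univ.filter
      (fun t : Fin (k i) => ((Phi k g hg σ₁ σ₂) (blockE k ⟨i, t⟩) : ℕ) < ∑ l, g l)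
      = Finset.univ.filter (fun t : Fin (k i) => (t : ℕ) < g i) := by
    refine Finset.filter_congr fun t _ => ?_
    by_cases ht : (t : ℕ) < g i
    · rw [Phi_init k g hg σ₁ σ₂ i t ht]
      simp only [ht, iff_true]
      exact (σ₁ (blockE g ⟨i, ⟨(t : ℕ), ht⟩⟩)).2
    · rw [Phi_tail k g hg σ₁ σ₂ i t ht]
      simp only [ht, iff_false, not_lt]
      omega
  rw [hcong, card_filter_val_lt (hg i)]

lemma profile_sum (κ : ℕ) (hκ : κ ≤ ∑ i, k i) (σ : Equiv.Perm (Fin (∑ i, k i))) :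
    (∑ i, (Finset.univ.filter
      (fun t : Fin (k i) => (σ (blockE k ⟨i, t⟩) : ℕ) < κ)).card) = κ := by
  have h1 : ∀ i : Fin n, (Finset.univ.filter
      (fun t : Fin (k i) => (σ (blockE k ⟨i, t⟩) : ℕ) < κ)).card
      = ∑ t : Fin (k i), if (σ (blockE k ⟨i, t⟩) : ℕ) < κ then 1 else 0 :=
    fun i => Finset.card_filter _ _
  rw [Finset.sum_congr rfl fun i _ => h1 i]
  have h2 : (∑ i : Fin n, ∑ t : Fin (k i), if (σ (blockE k ⟨i, t⟩) : ℕ) < κ then 1 else 0)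
      = ∑ a : Σ i : Fin n, Fin (k i), if (σ (blockE k a) : ℕ) < κ then 1 else 0 := by
    rw [← Finset.univ_sigma_univ, Finset.sum_sigma]
  rw [h2]
  have h3 : (∑ a : Σ i : Fin n, Fin (k i), if (σ (blockE k a) : ℕ) < κ then 1 else 0)
      = ∑ x : Fin (∑ i, k i), if (σ x : ℕ) < κ then 1 else 0 :=
    Fintype.sum_equiv (blockE k) _ _ fun a => rfl
  rw [h3]
  have h4 : (∑ x : Fin (∑ i, k i), if (σ x : ℕ) < κ then 1 else 0)
      = ∑ y : Fin (∑ i, k i), if (y : ℕ) < κ then 1 else 0 :=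
    Fintype.sum_equiv σ _ _ fun x => rfl
  rw [h4, sum_ite_lt hκ]

lemma shuffle_initial_filter (σ : Equiv.Perm (Fin (∑ i, k i))) (hσ : IsShuffle k σ)
    (κ : ℕ) (i : Fin n) (t : Fin (k i)) :
    ((t : ℕ) < (Finset.univ.filter
        (fun t : Fin (k i) => (σ (blockE k ⟨i, t⟩) : ℕ) < κ)).card
      ↔ (σ (blockE k ⟨i, t⟩) : ℕ) < κ) := by
  rw [isShuffle_iff' k] at hσ
  have hdc : ∀ u t : Fin (k i), u ≤ t →
      t ∈ Finset.univ.filter (fun t : Fin (k i) => (σ (blockE k ⟨i, t⟩) : ℕ) < κ) →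
      u ∈ Finset.univ.filter (fun t : Fin (k i) => (σ (blockE k ⟨i, t⟩) : ℕ) < κ) := by
    intro u t hut htm
    simp only [Finset.mem_filter, Finset.mem_univ, true_and] at htm ⊢
    rcases eq_or_lt_of_le hut with rfl | hlt
    · exact htm
    · have := hσ i u t (Fin.lt_def.mp hlt)
      rw [Fin.lt_def] at this
      omega
  have := (mem_lowerSet_iff _ hdc t).symm
  simp only [Finset.mem_filter, Finset.mem_univ, true_and] at this
  exact this


lemma exists_sumCongr {α β : Type*} [Finite α] [Finite β] [DecidableEq α] [DecidableEq β]
    (s : Equiv.Perm (α ⊕ β)) (h : ∀ a : α, ∃ c, s (Sum.inl a) = Sum.inl c) :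
    ∃ (σ₁ : Equiv.Perm α) (σ₂ : Equiv.Perm β), Equiv.sumCongr σ₁ σ₂ = s := by
  classical
  set φ : α → α := fun a => Classical.choose (h a) with hφ
  have hφs : ∀ a, s (Sum.inl a) = Sum.inl (φ a) := fun a => Classical.choose_spec (h a)
  have hinj : Function.Injective φ := by
    intro a a' haa
    have h2 : s (Sum.inl a) = s (Sum.inl a') := by rw [hφs, hφs, haa]
    exact Sum.inl_injective (s.injective h2)
  have hbij : Function.Bijective φ := Finite.injective_iff_bijective.mp hinj
  have hr : ∀ b : β, ∃ c, s (Sum.inr b) = Sum.inr c := by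
    intro b
    rcases hsb : s (Sum.inr b) with c | c
    · exfalso
      obtain ⟨a, rfl⟩ := hbij.2 c
      have h2 : s (Sum.inr b) = s (Sum.inl a) := by rw [hsb, hφs]
      simpa using s.injective h2
    · exact ⟨c, rfl⟩
  set ψ : β → β := fun b => Classical.choose (hr b) with hψ
  have hψs : ∀ b, s (Sum.inr b) = Sum.inr (ψ b) := fun b => Classical.choose_spec (hr b)
  have hinjψ : Function.Injective ψ := by
    intro b b' hbb
    have h2 : s (Sum.inr b) = s (Sum.inr b') := by rw [hψs, hψs, hbb]
    exact Sum.inr_injective (s.injective h2)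
  have hbijψ : Function.Bijective ψ := Finite.injective_iff_bijective.mp hinjψ
  refine ⟨Equiv.ofBijective φ hbij, Equiv.ofBijective ψ hbijψ, ?_⟩
  ext z
  rcases z with a | b
  · simp only [Equiv.sumCongr_apply, Sum.map_inl]
    exact (hφs a).symm
  · simp only [Equiv.sumCongr_apply, Sum.map_inr]
    exact (hψs b).symm

lemma Phi_apply_unshuffle_symm (hg : ∀ i, g i ≤ k i) (σ₁ : Equiv.Perm (Fin (∑ i, g i)))
    (σ₂ : Equiv.Perm (Fin (∑ i, (k i - g i))))
    (z : Fin (∑ i, g i) ⊕ Fin (∑ i, (k i - g i))) :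
    Phi k g hg σ₁ σ₂ ((unshuffle k g hg).symm z) =
      mergeE k g hg (Equiv.sumCongr σ₁ σ₂ z) := by
  simp [Phi]

lemma Phi_injective (hg : ∀ i, g i ≤ k i) {p₁ q₁ : Equiv.Perm (Fin (∑ i, g i))}
    {p₂ q₂ : Equiv.Perm (Fin (∑ i, (k i - g i)))}
    (h : Phi k g hg p₁ p₂ = Phi k g hg q₁ q₂) : p₁ = q₁ ∧ p₂ = q₂ := by
  have hz : ∀ z, Equiv.sumCongr p₁ p₂ z = Equiv.sumCongr q₁ q₂ z := by
    intro z
    have h1 : Phi k g hg p₁ p₂ ((unshuffle k g hg).symm z)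
        = Phi k g hg q₁ q₂ ((unshuffle k g hg).symm z) := by rw [h]
    rw [Phi_apply_unshuffle_symm, Phi_apply_unshuffle_symm] at h1
    exact (mergeE k g hg).injective h1
  constructor
  · ext a
    have h2 : p₁ a = q₁ a := by simpa using hz (Sum.inl a)
    rw [h2]
  · ext b
    have h2 : p₂ b = q₂ b := by simpa using hz (Sum.inr b)
    rw [h2]

lemma Phi_surj (hg : ∀ i, g i ≤ k i) (σ : Equiv.Perm (Fin (∑ i, k i))) (hσ : IsShuffle k σ)
    (hprof : ∀ i, (Finset.univ.filter
      (fun t : Fin (k i) => (σ (blockE k ⟨i, t⟩) : ℕ) < ∑ l, g l)).card = g i) :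
    ∃ σ₁ σ₂, Phi k g hg σ₁ σ₂ = σ := by
  classical
  have key : ∀ (i : Fin n) (t : Fin (k i)),
      ((t : ℕ) < g i ↔ (σ (blockE k ⟨i, t⟩) : ℕ) < ∑ l, g l) := by
    intro i t
    rw [← hprof i]
    exact shuffle_initial_filter k σ hσ (∑ l, g l) i t
  set s : Equiv.Perm (Fin (∑ i, g i) ⊕ Fin (∑ i, (k i - g i))) :=
    ((unshuffle k g hg).symm.trans (σ : Equiv.Perm (Fin (∑ i, k i)))).trans (mergeE k g hg).symm with hs
  have hleft : ∀ a, ∃ c, s (Sum.inl a) = Sum.inl c := by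
    intro a
    obtain ⟨⟨i, v⟩, rfl⟩ := (blockE g).surjective a
    have hvk : (v : ℕ) < k i := lt_of_lt_of_le v.2 (hg i)
    have hv : ((⟨(v : ℕ), hvk⟩ : Fin (k i)) : ℕ) < g i := v.2
    have h1 : (unshuffle k g hg).symm (Sum.inl (blockE g ⟨i, v⟩)) =
        blockE k ⟨i, ⟨(v : ℕ), hvk⟩⟩ := by
      rw [Equiv.symm_apply_eq, unshuffle_init k g hg i _ hv]
    have hσv : (σ (blockE k ⟨i, ⟨(v : ℕ), hvk⟩⟩) : ℕ) < ∑ l, g l := (key i _).mp hv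
    refine ⟨⟨(σ (blockE k ⟨i, ⟨(v : ℕ), hvk⟩⟩) : ℕ), hσv⟩, ?_⟩
    simp only [hs, Equiv.trans_apply, h1]
    rw [Equiv.symm_apply_eq]
    exact Fin.ext
      (mergeE_inl k g hg ⟨(σ (blockE k ⟨i, ⟨(v : ℕ), hvk⟩⟩) : ℕ), hσv⟩).symm
  obtain ⟨σ₁, σ₂, hsum⟩ := exists_sumCongr s hleft
  refine ⟨σ₁, σ₂, ?_⟩
  ext x
  have h0 : Phi k g hg σ₁ σ₂ x
      = (mergeE k g hg) ((Equiv.sumCongr σ₁ σ₂) (unshuffle k g hg x)) := rfl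
  rw [h0, hsum, hs]
  simp

end Correspondence

end ShuffleProof

open ShuffleProof


/-- For any `0 ≤ κ ≤ N = ∑ k i`, the signed shuffle count decomposes as
`α(k) = ∑_{k' ≤ k, ∑ k' = κ} (−1)^{∑ᵢ (kᵢ − k'ᵢ)(∑_{j>i} k'ⱼ)} α(k') α(k − k')`. -/
theorem shuffleAlpha_decomposition (n : ℕ) (hn : 1 ≤ n) (k : Fin n → ℕ) (κ : ℕ)
    (hκ : κ ≤ ∑ i, k i) :
    shuffleAlpha k =
      ∑ k' : (∀ i : Fin n, Fin (k i + 1)),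
        if (∑ i, (k' i : ℕ)) = κ then
          (-1 : ℤ) ^ (∑ i, (k i - (k' i : ℕ)) *
              (∑ j ∈ Finset.univ.filter (fun j => i < j), (k' j : ℕ)))
            * shuffleAlpha (fun i => (k' i : ℕ))
            * shuffleAlpha (fun i => k i - (k' i : ℕ))
        else 0 := by
  classical
  have hcard : ∀ (σ : Equiv.Perm (Fin (∑ i, k i))) (i : Fin n),
      (Finset.univ.filter (fun t : Fin (k i) => (σ (blockE k ⟨i, t⟩) : ℕ) < κ)).card ≤ k i :=
    fun σ i => le_trans (Finset.card_filter_le _ _) (by simp)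
  set prof : Equiv.Perm (Fin (∑ i, k i)) → (∀ i : Fin n, Fin (k i + 1)) := fun σ i =>
    ⟨(Finset.univ.filter (fun t : Fin (k i) => (σ (blockE k ⟨i, t⟩) : ℕ) < κ)).card,
      Nat.lt_succ_of_le (hcard σ i)⟩ with hprofdef
  have hprofsum : ∀ σ : Equiv.Perm (Fin (∑ i, k i)), (∑ i, (prof σ i : ℕ)) = κ := by
    intro σ
    exact profile_sum k κ hκ σ
  have hLHS : shuffleAlpha k =
      ∑ k' : (∀ i : Fin n, Fin (k i + 1)), ∑ σ : Equiv.Perm (Fin (∑ i, k i)),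
        if k' = prof σ then (if IsShuffle k σ then ((Equiv.Perm.sign σ : ℤˣ) : ℤ) else 0)
        else 0 := by
    calc shuffleAlpha k
        = ∑ σ : Equiv.Perm (Fin (∑ i, k i)), ∑ k' : (∀ i : Fin n, Fin (k i + 1)),
            if k' = prof σ then (if IsShuffle k σ then ((Equiv.Perm.sign σ : ℤˣ) : ℤ) else 0)
            else 0 := by
          rw [shuffleAlpha]
          refine Finset.sum_congr rfl fun σ _ => ?_
          rw [Fintype.sum_ite_eq' (prof σ)
            (fun _ => (if IsShuffle k σ then ((Equiv.Perm.sign σ : ℤˣ) : ℤ) else 0))]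
      _ = _ := Finset.sum_comm
  rw [hLHS]
  refine Finset.sum_congr rfl fun k' _ => ?_
  by_cases hA : (∑ i, (k' i : ℕ)) = κ
  · rw [if_pos hA]
    have hg : ∀ i, ((k' i : ℕ)) ≤ k i := fun i => Nat.lt_succ_iff.mp (k' i).2
    have hL2 : (∑ σ : Equiv.Perm (Fin (∑ i, k i)),
        if k' = prof σ then (if IsShuffle k σ then ((Equiv.Perm.sign σ : ℤˣ) : ℤ) else 0)
        else 0) =
        ∑ σ ∈ Finset.univ.filter
          (fun σ : Equiv.Perm (Fin (∑ i, k i)) => k' = prof σ ∧ IsShuffle k σ),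
          ((Equiv.Perm.sign σ : ℤˣ) : ℤ) := by
      rw [Finset.sum_filter]
      refine Finset.sum_congr rfl fun σ _ => ?_
      by_cases h1 : k' = prof σ <;> by_cases h2 : IsShuffle k σ <;> simp [h1, h2]
    rw [hL2]
    have hR1 : (-1 : ℤ) ^ (∑ i, (k i - (k' i : ℕ)) *
            (∑ j ∈ Finset.univ.filter (fun j => i < j), (k' j : ℕ)))
          * shuffleAlpha (fun i => (k' i : ℕ)) * shuffleAlpha (fun i => k i - (k' i : ℕ))
        = (∑ p : Equiv.Perm (Fin (∑ i, (k' i : ℕ))) ×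
            Equiv.Perm (Fin (∑ i, (k i - (k' i : ℕ)))),
          (-1 : ℤ) ^ (∑ i, (k i - (k' i : ℕ)) *
              (∑ j ∈ Finset.univ.filter (fun j => i < j), (k' j : ℕ))) *
            ((if IsShuffle (fun i => (k' i : ℕ)) p.1
                then ((Equiv.Perm.sign p.1 : ℤˣ) : ℤ) else 0) *
              (if IsShuffle (fun i => k i - (k' i : ℕ)) p.2
                then ((Equiv.Perm.sign p.2 : ℤˣ) : ℤ) else 0))) := by
      rw [mul_assoc, shuffleAlpha, shuffleAlpha, Fintype.sum_mul_sum, Finset.mul_sum]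
      rw [Fintype.sum_prod_type]
      exact Finset.sum_congr rfl fun σ₁ _ => Finset.mul_sum _ _ _
    rw [hR1]
    have hR2 : (∑ p : Equiv.Perm (Fin (∑ i, (k' i : ℕ))) ×
          Equiv.Perm (Fin (∑ i, (k i - (k' i : ℕ)))),
        (-1 : ℤ) ^ (∑ i, (k i - (k' i : ℕ)) *
            (∑ j ∈ Finset.univ.filter (fun j => i < j), (k' j : ℕ))) *
          ((if IsShuffle (fun i => (k' i : ℕ)) p.1
              then ((Equiv.Perm.sign p.1 : ℤˣ) : ℤ) else 0) *
            (if IsShuffle (fun i => k i - (k' i : ℕ)) p.2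
              then ((Equiv.Perm.sign p.2 : ℤˣ) : ℤ) else 0))) =
        ∑ p ∈ Finset.univ.filter
          (fun p : Equiv.Perm (Fin (∑ i, (k' i : ℕ))) ×
              Equiv.Perm (Fin (∑ i, (k i - (k' i : ℕ)))) =>
            IsShuffle (fun i => (k' i : ℕ)) p.1 ∧ IsShuffle (fun i => k i - (k' i : ℕ)) p.2),
          (-1 : ℤ) ^ (∑ i, (k i - (k' i : ℕ)) *
              (∑ j ∈ Finset.univ.filter (fun j => i < j), (k' j : ℕ))) *
            (((Equiv.Perm.sign p.1 : ℤˣ) : ℤ) * ((Equiv.Perm.sign p.2 : ℤˣ) : ℤ)) := by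
      rw [Finset.sum_filter]
      refine Finset.sum_congr rfl fun p _ => ?_
      by_cases h1 : IsShuffle (fun i => (k' i : ℕ)) p.1 <;>
        by_cases h2 : IsShuffle (fun i => k i - (k' i : ℕ)) p.2 <;> simp [h1, h2]
    rw [hR2]
    refine (Finset.sum_bij
      (fun p _ => Phi k (fun i => (k' i : ℕ)) hg p.1 p.2) ?_ ?_ ?_ ?_).symm
    · rintro p hp
      rw [Finset.mem_filter] at hp ⊢
      obtain ⟨-, h1, h2⟩ := hp
      refine ⟨Finset.mem_univ _, ?_, ?_⟩
      · funext i
        refine Fin.ext ?_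
        have hv := Phi_profile k (fun i => (k' i : ℕ)) hg p.1 p.2 i
        simp only [hA] at hv
        exact hv.symm
      · exact (Phi_isShuffle_iff k (fun i => (k' i : ℕ)) hg p.1 p.2).mpr ⟨h1, h2⟩
    · rintro p hp q hq hpq
      obtain ⟨e1, e2⟩ := Phi_injective k (fun i => (k' i : ℕ)) hg hpq
      exact Prod.ext e1 e2
    · intro σ hσm
      rw [Finset.mem_filter] at hσm
      obtain ⟨-, hp, hsh⟩ := hσm
      have hprof' : ∀ i, (Finset.univ.filter
          (fun t : Fin (k i) => (σ (blockE k ⟨i, t⟩) : ℕ) < ∑ l, (k' l : ℕ))).card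
          = (k' i : ℕ) := by
        intro i
        simp only [hA]
        exact (congrArg Fin.val (congrFun hp i)).symm
      obtain ⟨σ₁, σ₂, hΦ⟩ := Phi_surj k (fun i => (k' i : ℕ)) hg σ hsh hprof'
      refine ⟨(σ₁, σ₂), ?_, hΦ⟩
      rw [Finset.mem_filter]
      refine ⟨Finset.mem_univ _, ?_⟩
      exact (Phi_isShuffle_iff k (fun i => (k' i : ℕ)) hg σ₁ σ₂).mp (by rw [hΦ]; exact hsh)
    · intro p hp
      have hs := sign_Phi k (fun i => (k' i : ℕ)) hg p.1 p.2
      rw [sign_piPerm] at hs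
      have hsz : ((Equiv.Perm.sign (Phi k (fun i => (k' i : ℕ)) hg p.1 p.2) : ℤˣ) : ℤ)
          = ((Equiv.Perm.sign p.1 : ℤˣ) : ℤ) * ((Equiv.Perm.sign p.2 : ℤˣ) : ℤ)
            * (-1 : ℤ) ^ (∑ i, (k i - (k' i : ℕ)) *
              (∑ j ∈ Finset.univ.filter (fun j => i < j), (k' j : ℕ))) := by
        rw [hs]
        simp [Units.val_mul]
      rw [hsz]
      ring
  · rw [if_neg hA]
    refine Finset.sum_eq_zero fun σ _ => ?_
    rw [if_neg]
    intro h
    exact hA (by rw [h]; exact hprofsum σ)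
end

section
/- Let n ≥ 1, k : Fin n → ℕ, N := ∑_i k(i), and fix κ with 0 ≤ κ ≤ N. For k' : Fin n → ℕ with k' ≤ k pointwise and ∑_i k'(i) = κ, write k'' := k − k', and let τ_{k',k''} be the block-rearrangement permutation of Fin N determined by k' and k''. For σ' a permutation of Fin κ and σ'' a permutation of Fin (N − κ), let σ' ⊕ σ'' denote the permutation of Fin N acting as σ' on {0,…,κ−1} and as x ↦ κ + σ''(x − κ) on {κ,…,N−1}. Then the map ((k', σ', σ'')) ↦ (σ' ⊕ σ'') ∘ τ_{k',k''}, defined on the set of triples where k' : Fin n → ℕ satisfies k' ≤ k pointwise and ∑_i k'(i) = κ, σ' is a k'-shuffle and σ'' is a k''-shuffle, is a bijection onto the set of k-shuffles of Fin N. -/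
open scoped Classical

/-- `τ` is the block-rearrangement permutation determined by the pointwise decomposition
`k = k' + (k - k')`: on the block `B_i` (for sizes `k`), the first `k' i` elements are sent
order-preservingly to the interval of length `k' i` starting at `∑_{j<i} k' j`, and the
remaining `k i - k' i` elements are sent order-preservingly to the interval of length
`k i - k' i` starting at `(∑ j, k' j) + ∑_{j<i} (k j - k' j)`. -/
def IsBlockRearrange {n N : ℕ} (k k' : Fin n → ℕ) (τ : Equiv.Perm (Fin N)) : Prop :=
  ∀ (i : Fin n) (r : ℕ) (x : Fin N), (x : ℕ) = blockStart k i + r → r < k i →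
    (r < k' i → (τ x : ℕ) = blockStart k' i + r) ∧
    (k' i ≤ r →
      (τ x : ℕ) = (∑ j, k' j) + blockStart (fun j => k j - k' j) i + (r - k' i))

/-- `σ' ⊕ σ''`: the permutation of `Fin N` acting as `σ'` on `{0, …, κ-1}` and as
`x ↦ κ + σ''(x - κ)` on `{κ, …, N-1}`. -/
def sumPerm {κ N : ℕ} (h : κ ≤ N) (σ' : Equiv.Perm (Fin κ))
    (σ'' : Equiv.Perm (Fin (N - κ))) : Equiv.Perm (Fin N) :=
  (finSumFinEquiv.trans (finCongr (Nat.add_sub_cancel' h))).permCongr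
    (Equiv.sumCongr σ' σ'')

namespace SD

def bS {n : ℕ} (k : Fin n → ℕ) (m : ℕ) : ℕ :=
  ∑ j ∈ Finset.univ.filter (fun j : Fin n => (j : ℕ) < m), k j

lemma blockStart_eq {n : ℕ} (k : Fin n → ℕ) (i : Fin n) : blockStart k i = bS k i := by
  unfold blockStart bS
  apply Finset.sum_congr _ (fun _ _ => rfl)
  exact Finset.filter_congr (fun j _ => Iff.rfl)

lemma bS_zero {n : ℕ} (k : Fin n → ℕ) : bS k 0 = 0 := by simp [bS]

lemma bS_succ {n : ℕ} (k : Fin n → ℕ) {m : ℕ} (hm : m < n) :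
    bS k (m + 1) = bS k m + k ⟨m, hm⟩ := by
  unfold bS
  have : Finset.univ.filter (fun j : Fin n => (j : ℕ) < m + 1) =
      insert (⟨m, hm⟩ : Fin n) (Finset.univ.filter (fun j : Fin n => (j : ℕ) < m)) := by
    ext j
    simp only [Finset.mem_filter, Finset.mem_univ, true_and, Finset.mem_insert, Fin.ext_iff]
    omega
  rw [this, Finset.sum_insert (by simp), add_comm]

lemma bS_top {n : ℕ} (k : Fin n → ℕ) {m : ℕ} (hm : n ≤ m) : bS k m = ∑ i, k i := by
  unfold bS
  apply Finset.sum_congr _ (fun _ _ => rfl)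
  rw [Finset.filter_true_of_mem]
  exact fun j _ => lt_of_lt_of_le j.2 hm

lemma bS_mono {n : ℕ} (k : Fin n → ℕ) {m m' : ℕ} (h : m ≤ m') : bS k m ≤ bS k m' := by
  apply Finset.sum_le_sum_of_subset
  intro j hj
  simp only [Finset.mem_filter, Finset.mem_univ, true_and] at *
  omega

lemma bS_succ' {n : ℕ} (k : Fin n → ℕ) (i : Fin n) : bS k ((i : ℕ) + 1) = bS k i + k i := by
  rw [bS_succ k i.2]

/-- `bS k i + r < ∑ k` when `r < k i`. -/
lemma bS_add_lt {n : ℕ} (k : Fin n → ℕ) (i : Fin n) {r : ℕ} (hr : r < k i) :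
    bS k (i : ℕ) + r < ∑ j, k j := by
  have h1 : bS k (i : ℕ) + r < bS k ((i : ℕ) + 1) := by rw [bS_succ' k i]; omega
  have h2 : bS k ((i : ℕ) + 1) ≤ bS k n := bS_mono k i.2
  rw [bS_top k le_rfl] at h2
  omega

lemma exists_idx {n : ℕ} (k : Fin n → ℕ) {x m : ℕ} (hm : m ≤ n) (hx : x < bS k m) :
    ∃ i : Fin n, ∃ r : ℕ, r < k i ∧ x = bS k (i : ℕ) + r := by
  induction m with
  | zero => rw [bS_zero] at hx; omega
  | succ m ih =>
    by_cases h : x < bS k m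
    · exact ih (by omega) h
    · have hmn : m < n := hm
      refine ⟨⟨m, hmn⟩, x - bS k m, ?_, ?_⟩
      · rw [bS_succ k hmn] at hx; omega
      · simp only [Fin.val_mk]; omega

lemma exists_part {n : ℕ} (k : Fin n → ℕ) {x : ℕ} (hx : x < ∑ j, k j) :
    ∃ i : Fin n, ∃ r : ℕ, r < k i ∧ x = bS k (i : ℕ) + r :=
  exists_idx k le_rfl (by rwa [bS_top k le_rfl])

lemma idx_unique {n : ℕ} (k : Fin n → ℕ) {i j : Fin n} {r s : ℕ}
    (hr : r < k i) (hs : s < k j) (h : bS k (i : ℕ) + r = bS k (j : ℕ) + s) :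
    i = j := by
  rcases lt_trichotomy i j with hij | hij | hij
  · exfalso
    have h1 : bS k ((i : ℕ) + 1) ≤ bS k (j : ℕ) := bS_mono k hij
    rw [bS_succ' k i] at h1
    omega
  · exact hij
  · exfalso
    have h1 : bS k ((j : ℕ) + 1) ≤ bS k (i : ℕ) := bS_mono k hij
    rw [bS_succ' k j] at h1
    omega

lemma sum_sub {n : ℕ} (k k' : Fin n → ℕ) (hle : ∀ i, k' i ≤ k i) :
    ∑ i, (k i - k' i) = ∑ i, k i - ∑ i, k' i := by
  have h1 : ∑ i, k i = ∑ i, k' i + ∑ i, (k i - k' i) := by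
    rw [← Finset.sum_add_distrib]
    exact Finset.sum_congr rfl (fun i _ => by have := hle i; omega)
  omega

lemma sum_le_sum' {n : ℕ} (k k' : Fin n → ℕ) (hle : ∀ i, k' i ≤ k i) :
    ∑ i, k' i ≤ ∑ i, k i := Finset.sum_le_sum (fun i _ => hle i)

lemma sumPerm_apply_lt {κ N : ℕ} (h : κ ≤ N) (σ' : Equiv.Perm (Fin κ))
    (σ'' : Equiv.Perm (Fin (N - κ))) (x : Fin N) (hx : (x : ℕ) < κ) :
    (sumPerm h σ' σ'' x : ℕ) = σ' ⟨x, hx⟩ := by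
  unfold sumPerm
  rw [Equiv.permCongr_apply]
  have he : (finSumFinEquiv.trans (finCongr (Nat.add_sub_cancel' h))).symm x
      = Sum.inl (⟨x, hx⟩ : Fin κ) := by
    apply (finSumFinEquiv.trans (finCongr (Nat.add_sub_cancel' h))).injective
    simp [Equiv.apply_symm_apply, Fin.ext_iff]
  rw [he]
  simp [Fin.ext_iff]

lemma sumPerm_apply_ge {κ N : ℕ} (h : κ ≤ N) (σ' : Equiv.Perm (Fin κ))
    (σ'' : Equiv.Perm (Fin (N - κ))) (x : Fin N) (hx : κ ≤ (x : ℕ)) :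
    (sumPerm h σ' σ'' x : ℕ) = κ + σ'' ⟨(x : ℕ) - κ, by omega⟩ := by
  unfold sumPerm
  rw [Equiv.permCongr_apply]
  have he : (finSumFinEquiv.trans (finCongr (Nat.add_sub_cancel' h))).symm x
      = Sum.inr (⟨(x : ℕ) - κ, by omega⟩ : Fin (N - κ)) := by
    apply (finSumFinEquiv.trans (finCongr (Nat.add_sub_cancel' h))).injective
    simp [Equiv.apply_symm_apply, Fin.ext_iff]
    omega
  rw [he]
  simp [Fin.ext_iff]

section Char

variable {n : ℕ} {k k' : Fin n → ℕ} {κ : ℕ}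

/-- Characterization of the composite `sumPerm ∘ τ` on block positions: first part. -/
lemma comp_char_lt (hle : ∀ i, k' i ≤ k i) (hκsum : ∑ i, k' i = κ) (hκ : κ ≤ ∑ i, k i)
    (τ : Equiv.Perm (Fin (∑ i, k i))) (hτ : IsBlockRearrange k k' τ)
    (σ' : Equiv.Perm (Fin κ)) (σ'' : Equiv.Perm (Fin (∑ i, k i - κ)))
    (i : Fin n) (r : ℕ) (x : Fin (∑ i, k i)) (hx : (x : ℕ) = bS k (i : ℕ) + r)
    (hr : r < k' i) :
    ∃ h : bS k' (i : ℕ) + r < κ,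
      ((sumPerm hκ σ' σ'' * τ) x : ℕ) = σ' ⟨bS k' (i : ℕ) + r, h⟩ := by
  have hb : bS k' (i : ℕ) + r < κ := by
    have := bS_add_lt k' i hr; omega
  refine ⟨hb, ?_⟩
  have hτx : (τ x : ℕ) = bS k' (i : ℕ) + r := by
    have := ((hτ i r x (by rw [hx, blockStart_eq]) (lt_of_lt_of_le hr (hle i))).1 hr)
    rwa [blockStart_eq] at this
  have : (sumPerm hκ σ' σ'' (τ x) : ℕ) = σ' ⟨τ x, by omega⟩ :=
    sumPerm_apply_lt hκ σ' σ'' (τ x) (by omega)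
  rw [Equiv.Perm.mul_apply, this]
  congr 1
  exact congrArg σ' (Fin.ext hτx)

/-- Characterization of the composite `sumPerm ∘ τ` on block positions: second part. -/
lemma comp_char_ge (hle : ∀ i, k' i ≤ k i) (hκsum : ∑ i, k' i = κ) (hκ : κ ≤ ∑ i, k i)
    (τ : Equiv.Perm (Fin (∑ i, k i))) (hτ : IsBlockRearrange k k' τ)
    (σ' : Equiv.Perm (Fin κ)) (σ'' : Equiv.Perm (Fin (∑ i, k i - κ)))
    (i : Fin n) (r : ℕ) (x : Fin (∑ i, k i)) (hx : (x : ℕ) = bS k (i : ℕ) + r)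
    (hr : r < k i) (hr' : k' i ≤ r) :
    ∃ h : bS (fun j => k j - k' j) (i : ℕ) + (r - k' i) < ∑ i, k i - κ,
      ((sumPerm hκ σ' σ'' * τ) x : ℕ)
        = κ + σ'' ⟨bS (fun j => k j - k' j) (i : ℕ) + (r - k' i), h⟩ := by
  have hb : bS (fun j => k j - k' j) (i : ℕ) + (r - k' i) < ∑ i, k i - κ := by
    have h1 : bS (fun j => k j - k' j) (i : ℕ) + (r - k' i) < ∑ j, (k j - k' j) :=
      bS_add_lt (fun j => k j - k' j) i (r := r - k' i)
        (by show r - k' i < k i - k' i; have := hle i; omega)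
    have h2 := sum_sub k k' hle
    omega
  refine ⟨hb, ?_⟩
  have hτx : (τ x : ℕ) = κ + (bS (fun j => k j - k' j) (i : ℕ) + (r - k' i)) := by
    have := ((hτ i r x (by rw [hx, blockStart_eq]) hr).2 hr')
    rw [blockStart_eq, hκsum] at this
    omega
  have : (sumPerm hκ σ' σ'' (τ x) : ℕ) = κ + σ'' ⟨(τ x : ℕ) - κ, by omega⟩ :=
    sumPerm_apply_ge hκ σ' σ'' (τ x) (by omega)
  rw [Equiv.Perm.mul_apply, this]
  congr 2
  exact congrArg σ'' (Fin.ext (by simp only [Fin.val_mk]; omega))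

end Char

end SD
namespace SD
section Char
variable {n : ℕ} {k k' : Fin n → ℕ} {κ : ℕ}

lemma comp_lt_kappa_iff (hle : ∀ i, k' i ≤ k i) (hκsum : ∑ i, k' i = κ)
    (hκ : κ ≤ ∑ i, k i)
    (τ : Equiv.Perm (Fin (∑ i, k i))) (hτ : IsBlockRearrange k k' τ)
    (σ' : Equiv.Perm (Fin κ)) (σ'' : Equiv.Perm (Fin (∑ i, k i - κ)))
    (i : Fin n) (r : ℕ) (x : Fin (∑ i, k i)) (hx : (x : ℕ) = bS k (i : ℕ) + r)
    (hr : r < k i) :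
    (((sumPerm hκ σ' σ'' * τ) x : ℕ) < κ ↔ r < k' i) := by
  constructor
  · intro hlt
    by_contra hcon
    obtain ⟨h, heq⟩ := comp_char_ge hle hκsum hκ τ hτ σ' σ'' i r x hx hr (by omega)
    omega
  · intro hrk
    obtain ⟨h, heq⟩ := comp_char_lt hle hκsum hκ τ hτ σ' σ'' i r x hx hrk
    rw [heq]
    exact (σ' _).2

lemma comp_isShuffle (hle : ∀ i, k' i ≤ k i) (hκsum : ∑ i, k' i = κ)
    (hκ : κ ≤ ∑ i, k i)
    (τ : Equiv.Perm (Fin (∑ i, k i))) (hτ : IsBlockRearrange k k' τ)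
    (σ' : Equiv.Perm (Fin κ)) (σ'' : Equiv.Perm (Fin (∑ i, k i - κ)))
    (hσ' : IsShuffle k' σ') (hσ'' : IsShuffle (fun j => k j - k' j) σ'') :
    IsShuffle k (sumPerm hκ σ' σ'' * τ) := by
  intro i x y h1 h2 h3
  rw [blockStart_eq] at h1 h3
  set F := sumPerm hκ σ' σ'' * τ with hF
  set r := (x : ℕ) - bS k (i : ℕ) with hrdef
  set s := (y : ℕ) - bS k (i : ℕ) with hsdef
  have hx : (x : ℕ) = bS k (i : ℕ) + r := by omega
  have hy : (y : ℕ) = bS k (i : ℕ) + s := by omega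
  have hrs : r < s := by omega
  have hsk : s < k i := by omega
  have hrk : r < k i := by omega
  rw [Fin.lt_def]
  by_cases hs1 : s < k' i
  · -- both in first part
    obtain ⟨hb1, he1⟩ := comp_char_lt hle hκsum hκ τ hτ σ' σ'' i r x hx (by omega)
    obtain ⟨hb2, he2⟩ := comp_char_lt hle hκsum hκ τ hτ σ' σ'' i s y hy hs1
    rw [he1, he2]
    have := hσ' i ⟨bS k' (i:ℕ) + r, hb1⟩ ⟨bS k' (i:ℕ) + s, hb2⟩
      (by rw [blockStart_eq]; simp) (by simp; omega)
      (by rw [blockStart_eq]; simp; omega)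
    exact this
  · by_cases hr1 : r < k' i
    · -- split case
      obtain ⟨hb1, he1⟩ := comp_char_lt hle hκsum hκ τ hτ σ' σ'' i r x hx hr1
      obtain ⟨hb2, he2⟩ := comp_char_ge hle hκsum hκ τ hτ σ' σ'' i s y hy hsk (by omega)
      rw [he1, he2]
      have := (σ' ⟨bS k' (i:ℕ) + r, hb1⟩).2
      omega
    · -- both in second part
      obtain ⟨hb1, he1⟩ := comp_char_ge hle hκsum hκ τ hτ σ' σ'' i r x hx hrk (by omega)
      obtain ⟨hb2, he2⟩ := comp_char_ge hle hκsum hκ τ hτ σ' σ'' i s y hy hsk (by omega)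
      rw [he1, he2]
      have := hσ'' i ⟨bS (fun j => k j - k' j) (i:ℕ) + (r - k' i), hb1⟩
        ⟨bS (fun j => k j - k' j) (i:ℕ) + (s - k' i), hb2⟩
        (by rw [blockStart_eq]; simp) (by simp; omega)
        (by rw [blockStart_eq]; simp only [Fin.val_mk]
            show _ < _ + (k i - k' i); omega)
      rw [Fin.lt_def] at this
      omega

end Char
end SD
namespace SD
section Inj
variable {n : ℕ} {k : Fin n → ℕ} {κ : ℕ}

lemma comp_inj {k'1 k'2 : Fin n → ℕ} (hle1 : ∀ i, k'1 i ≤ k i) (hle2 : ∀ i, k'2 i ≤ k i)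
    (hκ1 : ∑ i, k'1 i = κ) (hκ2 : ∑ i, k'2 i = κ) (hκ : κ ≤ ∑ i, k i)
    (τ1 τ2 : Equiv.Perm (Fin (∑ i, k i)))
    (hτ1 : IsBlockRearrange k k'1 τ1) (hτ2 : IsBlockRearrange k k'2 τ2)
    (σ'1 σ'2 : Equiv.Perm (Fin κ)) (σ''1 σ''2 : Equiv.Perm (Fin (∑ i, k i - κ)))
    (heq : sumPerm hκ σ'1 σ''1 * τ1 = sumPerm hκ σ'2 σ''2 * τ2) :
    k'1 = k'2 ∧ σ'1 = σ'2 ∧ σ''1 = σ''2 := by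
  have hk : k'1 = k'2 := by
    funext i
    have key : ∀ r, r < k i → (r < k'1 i ↔ r < k'2 i) := by
      intro r hr
      set x : Fin (∑ i, k i) := ⟨bS k (i : ℕ) + r, bS_add_lt k i hr⟩ with hxdef
      have hx : (x : ℕ) = bS k (i : ℕ) + r := rfl
      have h1 := comp_lt_kappa_iff hle1 hκ1 hκ τ1 hτ1 σ'1 σ''1 i r x hx hr
      have h2 := comp_lt_kappa_iff hle2 hκ2 hκ τ2 hτ2 σ'2 σ''2 i r x hx hr
      rw [heq] at h1
      omega
    have h1 := hle1 i
    have h2 := hle2 i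
    rcases lt_trichotomy (k'1 i) (k'2 i) with h | h | h
    · have := key (k'1 i) (by omega); omega
    · exact h
    · have := key (k'2 i) (by omega); omega
  subst hk
  refine ⟨rfl, ?_, ?_⟩
  · apply Equiv.ext
    intro y
    have hy : (y : ℕ) < ∑ i, k'1 i := by rw [hκ1]; exact y.2
    obtain ⟨i, s, hs, hys⟩ := exists_part k'1 hy
    have hsk : s < k i := lt_of_lt_of_le hs (hle1 i)
    set x : Fin (∑ i, k i) := ⟨bS k (i : ℕ) + s, bS_add_lt k i hsk⟩ with hxdef
    obtain ⟨hb1, he1⟩ := comp_char_lt hle1 hκ1 hκ τ1 hτ1 σ'1 σ''1 i s x rfl hs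
    obtain ⟨hb2, he2⟩ := comp_char_lt hle1 hκ1 hκ τ2 hτ2 σ'2 σ''2 i s x rfl hs
    rw [heq] at he1
    have hval : (σ'1 ⟨bS k'1 (i:ℕ) + s, hb1⟩ : ℕ) = σ'2 ⟨bS k'1 (i:ℕ) + s, hb2⟩ := by
      rw [← he1, ← he2]
    have hyy : y = ⟨bS k'1 (i:ℕ) + s, hb1⟩ := Fin.ext hys
    rw [hyy]
    exact Fin.ext hval
  · apply Equiv.ext
    intro z
    have hsub := sum_sub k k'1 hle1
    have hz : (z : ℕ) < ∑ i, (k i - k'1 i) := by rw [hsub, hκ1]; exact z.2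
    obtain ⟨i, t, ht, hzt⟩ := exists_part (fun j => k j - k'1 j) hz
    have htk : t < k i - k'1 i := ht
    have hrk : k'1 i + t < k i := by have := hle1 i; omega
    set x : Fin (∑ i, k i) := ⟨bS k (i : ℕ) + (k'1 i + t), bS_add_lt k i hrk⟩ with hxdef
    obtain ⟨hb1, he1⟩ := comp_char_ge hle1 hκ1 hκ τ1 hτ1 σ'1 σ''1 i (k'1 i + t) x rfl hrk
      (by omega)
    obtain ⟨hb2, he2⟩ := comp_char_ge hle1 hκ1 hκ τ2 hτ2 σ'2 σ''2 i (k'1 i + t) x rfl hrk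
      (by omega)
    rw [heq] at he1
    have hval : (σ''1 ⟨bS (fun j => k j - k'1 j) (i:ℕ) + (k'1 i + t - k'1 i), hb1⟩ : ℕ)
        = σ''2 ⟨bS (fun j => k j - k'1 j) (i:ℕ) + (k'1 i + t - k'1 i), hb2⟩ := by
      omega
    have hzz : z = ⟨bS (fun j => k j - k'1 j) (i:ℕ) + (k'1 i + t - k'1 i), hb1⟩ :=
      Fin.ext (by simp only [Fin.val_mk]; omega)
    rw [hzz]
    exact Fin.ext hval

end Inj
end SD
namespace SD

lemma lower_eq_range (F : Finset ℕ) (h : ∀ s ∈ F, ∀ r, r ≤ s → r ∈ F) :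
    F = Finset.range F.card := by
  rcases F.eq_empty_or_nonempty with he | hne
  · simp [he]
  · have hsub : F = Finset.range (F.max' hne + 1) := by
      ext r
      simp only [Finset.mem_range]
      constructor
      · intro hr; exact Nat.lt_succ_of_le (F.le_max' r hr)
      · intro hr; exact h _ (F.max'_mem hne) r (by omega)
    have hc : F.card = F.max' hne + 1 := by
      conv_lhs => rw [hsub]
      exact Finset.card_range _
    rw [hc]; exact hsub

section Surj
variable {n : ℕ} {k : Fin n → ℕ} {κ : ℕ}

lemma comp_surj (hκ : κ ≤ ∑ i, k i) (σ : Equiv.Perm (Fin (∑ i, k i)))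
    (hσ : IsShuffle k σ) :
    ∃ (k' : Fin n → ℕ) (_ : ∀ i, k' i ≤ k i) (_ : ∑ i, k' i = κ)
      (σ' : Equiv.Perm (Fin κ)) (σ'' : Equiv.Perm (Fin (∑ i, k i - κ))),
      IsShuffle k' σ' ∧ IsShuffle (fun j => k j - k' j) σ'' ∧
      ∀ τ : Equiv.Perm (Fin (∑ i, k i)), IsBlockRearrange k k' τ →
        sumPerm hκ σ' σ'' * τ = σ := by
  have hσb : ∀ (i : Fin n) (x y : Fin (∑ i, k i)), bS k (i:ℕ) ≤ (x:ℕ) → (x:ℕ) < (y:ℕ) →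
      (y:ℕ) < bS k (i:ℕ) + k i → σ x < σ y := by
    intro i x y h1 h2 h3
    exact hσ i x y (by rwa [blockStart_eq]) h2 (by rwa [blockStart_eq])
  set Q : Fin n → ℕ → Prop :=
    fun i r => ∃ h : bS k (i:ℕ) + r < ∑ j, k j, ((σ ⟨bS k (i:ℕ) + r, h⟩ : Fin (∑ j, k j)) : ℕ) < κ
    with hQdef
  set k' : Fin n → ℕ := fun i => ((Finset.range (k i)).filter (Q i)).card with hk'def
  have hle : ∀ i, k' i ≤ k i := by
    intro i
    calc ((Finset.range (k i)).filter (Q i)).card ≤ (Finset.range (k i)).card :=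
          Finset.card_filter_le _ _
      _ = k i := Finset.card_range _
  -- the filtered set is downward closed
  have hfe : ∀ i, (Finset.range (k i)).filter (Q i) = Finset.range (k' i) := by
    intro i
    exact lower_eq_range _ (by
      intro s hs r hrs
      simp only [Finset.mem_filter, Finset.mem_range] at hs ⊢
      obtain ⟨hsk, hN', hQs⟩ := hs
      refine ⟨by omega, ?_⟩
      have hNr : bS k (i:ℕ) + r < ∑ j, k j := by omega
      refine ⟨hNr, ?_⟩
      rcases Nat.lt_or_ge r s with hlt | hge
      · have := hσb i ⟨bS k (i:ℕ) + r, hNr⟩ ⟨bS k (i:ℕ) + s, hN'⟩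
          (by simp) (by simp; omega) (by simp; omega)
        rw [Fin.lt_def] at this
        omega
      · have : r = s := by omega
        subst this
        exact hQs)
  have hQiff : ∀ (i : Fin n) (r : ℕ), r < k i → ∀ h : bS k (i:ℕ) + r < ∑ j, k j,
      (((σ ⟨bS k (i:ℕ) + r, h⟩ : Fin (∑ j, k j)) : ℕ) < κ ↔ r < k' i) := by
    intro i r hr h
    constructor
    · intro hlt
      have : r ∈ (Finset.range (k i)).filter (Q i) := by
        simp only [Finset.mem_filter, Finset.mem_range]
        exact ⟨hr, h, hlt⟩
      rw [hfe i, Finset.mem_range] at this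
      exact this
    · intro hlt
      have : r ∈ (Finset.range (k i)).filter (Q i) := by
        rw [hfe i, Finset.mem_range]; exact hlt
      simp only [Finset.mem_filter, Finset.mem_range] at this
      obtain ⟨-, h', hlt'⟩ := this
      exact hlt'
  -- ∑ k' = κ
  have hdec : ∀ x : Fin (∑ j, k j), ∃ i : Fin n, ∃ r : ℕ, r < k i ∧ (x:ℕ) = bS k (i:ℕ) + r :=
    fun x => exists_part k x.2
  choose bI bR hR1 hR2 using hdec
  have hκs : ∑ i, k' i = κ := by
    set S : Finset (Fin (∑ j, k j)) := Finset.univ.filter (fun x => ((σ x : Fin (∑ j, k j)) : ℕ) < κ)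
      with hSdef
    have hScard : S.card = κ := by
      have h1 : S.card = (Finset.univ : Finset (Fin κ)).card := by
        apply Finset.card_bij (fun x hx => (⟨(σ x : Fin (∑ j, k j)), by
          simp only [hSdef, Finset.mem_filter] at hx; exact hx.2⟩ : Fin κ))
        · intro x hx; exact Finset.mem_univ _
        · intro x1 hx1 x2 hx2 h
          have hval : ((σ x1 : Fin (∑ j, k j)) : ℕ) = ((σ x2 : Fin (∑ j, k j)) : ℕ) := by simpa using h
          exact σ.injective (Fin.ext hval)
        · intro b _
          have hb : ((b : ℕ) : ℕ) < ∑ j, k j := lt_of_lt_of_le b.2 hκ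
          refine ⟨σ.symm ⟨b, hb⟩, ?_, ?_⟩
          · simp only [hSdef, Finset.mem_filter]
            refine ⟨Finset.mem_univ _, ?_⟩
            rw [Equiv.apply_symm_apply]
            exact b.2
          · apply Fin.ext
            simp only [Fin.val_mk]
            rw [Equiv.apply_symm_apply]
      rw [h1, Finset.card_univ, Fintype.card_fin]
    have hfib : S.card = ∑ i, (S.filter (fun x => bI x = i)).card :=
      Finset.card_eq_sum_card_fiberwise (fun x _ => Finset.mem_univ _)
    have hfi : ∀ i, (S.filter (fun x => bI x = i)).card = k' i := by
      intro i
      rw [hk'def]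
      apply Finset.card_bij
        (i := fun (x : Fin (∑ j, k j)) (hx : x ∈ S.filter (fun x => bI x = i)) => (x:ℕ) - bS k (i:ℕ))
      · intro x hx
        simp only [Finset.mem_filter] at hx
        have hxκ : ((σ x : Fin (∑ j, k j)) : ℕ) < κ := (Finset.mem_filter.mp hx.1).2
        have hbi := hx.2
        have hx2 := hR2 x
        have hx1 := hR1 x
        rw [hbi] at hx2 hx1
        simp only [Finset.mem_filter, Finset.mem_range]
        refine ⟨by omega, ?_⟩
        have hNx : bS k (i:ℕ) + ((x:ℕ) - bS k (i:ℕ)) < ∑ j, k j := by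
          have := x.2; omega
        refine ⟨hNx, ?_⟩
        have : (⟨bS k (i:ℕ) + ((x:ℕ) - bS k (i:ℕ)), hNx⟩ : Fin (∑ j, k j)) = x :=
          Fin.ext (by simp only [Fin.val_mk]; omega)
        rw [this]
        exact hxκ
      · intro x1 hx1 x2 hx2 h
        simp only [Finset.mem_filter] at hx1 hx2
        have e1 := hR2 x1; have e2 := hR2 x2
        rw [hx1.2] at e1; rw [hx2.2] at e2
        exact Fin.ext (by omega)
      · intro r hr
        simp only [Finset.mem_filter, Finset.mem_range] at hr
        obtain ⟨hrk, hNr, hrκ⟩ := hr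
        refine ⟨⟨bS k (i:ℕ) + r, hNr⟩, ?_, by simp⟩
        simp only [Finset.mem_filter]
        refine ⟨Finset.mem_filter.mpr ⟨Finset.mem_univ _, hrκ⟩, ?_⟩
        exact (idx_unique k hrk (hR1 _) ((hR2 ⟨bS k (i:ℕ) + r, hNr⟩))).symm
    rw [hfib] at hScard
    rw [← hScard]
    exact Finset.sum_congr rfl (fun i _ => (hfi i).symm)
  -- partitions of Fin κ and Fin (N-κ)
  have hdecκ : ∀ y : Fin κ, ∃ i : Fin n, ∃ r : ℕ, r < k' i ∧ (y:ℕ) = bS k' (i:ℕ) + r := by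
    intro y
    exact exists_part k' (by rw [hκs]; exact y.2)
  choose pi pr hpr1 hpr2 using hdecκ
  have hsub := sum_sub k k' hle
  have hdecκ' : ∀ z : Fin (∑ j, k j - κ), ∃ i : Fin n, ∃ t : ℕ,
      t < k i - k' i ∧ (z:ℕ) = bS (fun j => k j - k' j) (i:ℕ) + t := by
    intro z
    exact exists_part (fun j => k j - k' j) (by
      show (z : ℕ) < ∑ j, (k j - k' j)
      rw [hsub, hκs]; exact z.2)
  choose qi qt hqt1 hqt2 using hdecκ'
  -- build σ'
  have hA : ∀ y : Fin κ, bS k ((pi y : Fin n) : ℕ) + pr y < ∑ j, k j :=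
    fun y => bS_add_lt k (pi y) (lt_of_lt_of_le (hpr1 y) (hle (pi y)))
  have hAv : ∀ y : Fin κ, ((σ ⟨bS k ((pi y : Fin n) : ℕ) + pr y, hA y⟩ : Fin (∑ j, k j)) : ℕ) < κ :=
    fun y => (hQiff (pi y) (pr y) (lt_of_lt_of_le (hpr1 y) (hle (pi y))) (hA y)).2 (hpr1 y)
  set σ'f : Fin κ → Fin κ :=
    fun y => ⟨((σ ⟨bS k ((pi y : Fin n) : ℕ) + pr y, hA y⟩ : Fin (∑ j, k j)) : ℕ), hAv y⟩
    with hσ'fdef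
  have hinj' : Function.Injective σ'f := by
    intro y1 y2 h
    have hval : ((σ ⟨bS k ((pi y1 : Fin n) : ℕ) + pr y1, hA y1⟩ : Fin (∑ j, k j)) : ℕ)
        = ((σ ⟨bS k ((pi y2 : Fin n) : ℕ) + pr y2, hA y2⟩ : Fin (∑ j, k j)) : ℕ) := by
      simpa [hσ'fdef] using h
    have hxeq : (⟨bS k ((pi y1 : Fin n) : ℕ) + pr y1, hA y1⟩ : Fin (∑ j, k j))
        = ⟨bS k ((pi y2 : Fin n) : ℕ) + pr y2, hA y2⟩ := σ.injective (Fin.ext hval)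
    have hveq : bS k ((pi y1 : Fin n) : ℕ) + pr y1 = bS k ((pi y2 : Fin n) : ℕ) + pr y2 :=
      congrArg Fin.val hxeq
    have hpieq : pi y1 = pi y2 :=
      idx_unique k (lt_of_lt_of_le (hpr1 y1) (hle (pi y1)))
        (lt_of_lt_of_le (hpr1 y2) (hle (pi y2))) hveq
    rw [hpieq] at hveq
    have hpreq : pr y1 = pr y2 := by omega
    have e1 := hpr2 y1
    have e2 := hpr2 y2
    rw [hpieq, hpreq] at e1
    exact Fin.ext (by omega)
  set σ'E : Equiv.Perm (Fin κ) :=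
    Equiv.ofBijective σ'f (Finite.injective_iff_bijective.mp hinj') with hσ'Edef
  have hσ'app : ∀ y, σ'E y = σ'f y := fun y => rfl
  -- build σ''
  have hB : ∀ z : Fin (∑ j, k j - κ),
      bS k ((qi z : Fin n) : ℕ) + (k' (qi z) + qt z) < ∑ j, k j :=
    fun z => bS_add_lt k (qi z) (by have := hqt1 z; have := hle (qi z); omega)
  have hBv : ∀ z : Fin (∑ j, k j - κ),
      κ ≤ ((σ ⟨bS k ((qi z : Fin n) : ℕ) + (k' (qi z) + qt z), hB z⟩ : Fin (∑ j, k j)) : ℕ) := by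
    intro z
    have hlt : k' (qi z) + qt z < k (qi z) := by have := hqt1 z; have := hle (qi z); omega
    have := hQiff (qi z) (k' (qi z) + qt z) hlt (hB z)
    omega
  set σ''f : Fin (∑ j, k j - κ) → Fin (∑ j, k j - κ) :=
    fun z => ⟨((σ ⟨bS k ((qi z : Fin n) : ℕ) + (k' (qi z) + qt z), hB z⟩ : Fin (∑ j, k j)) : ℕ) - κ,
      by
        have h1 := (σ (⟨bS k ((qi z : Fin n) : ℕ) + (k' (qi z) + qt z), hB z⟩ :
          Fin (∑ j, k j))).2
        have h2 := hBv z
        omega⟩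
    with hσ''fdef
  have hinj'' : Function.Injective σ''f := by
    intro z1 z2 h
    have hval : ((σ ⟨bS k ((qi z1 : Fin n) : ℕ) + (k' (qi z1) + qt z1), hB z1⟩ :
          Fin (∑ j, k j)) : ℕ) - κ
        = ((σ ⟨bS k ((qi z2 : Fin n) : ℕ) + (k' (qi z2) + qt z2), hB z2⟩ :
          Fin (∑ j, k j)) : ℕ) - κ := by
      simpa [hσ''fdef] using h
    have hval' : ((σ ⟨bS k ((qi z1 : Fin n) : ℕ) + (k' (qi z1) + qt z1), hB z1⟩ :
          Fin (∑ j, k j)) : ℕ)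
        = ((σ ⟨bS k ((qi z2 : Fin n) : ℕ) + (k' (qi z2) + qt z2), hB z2⟩ :
          Fin (∑ j, k j)) : ℕ) := by
      have := hBv z1; have := hBv z2; omega
    have hxeq := σ.injective (Fin.ext hval')
    have hveq : bS k ((qi z1 : Fin n) : ℕ) + (k' (qi z1) + qt z1)
        = bS k ((qi z2 : Fin n) : ℕ) + (k' (qi z2) + qt z2) := congrArg Fin.val hxeq
    have hlt1 : k' (qi z1) + qt z1 < k (qi z1) := by have := hqt1 z1; have := hle (qi z1); omega
    have hlt2 : k' (qi z2) + qt z2 < k (qi z2) := by have := hqt1 z2; have := hle (qi z2); omega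
    have hqieq : qi z1 = qi z2 := idx_unique k hlt1 hlt2 hveq
    rw [hqieq] at hveq
    have hqteq : qt z1 = qt z2 := by omega
    have e1 := hqt2 z1
    have e2 := hqt2 z2
    rw [hqieq, hqteq] at e1
    exact Fin.ext (by omega)
  set σ''E : Equiv.Perm (Fin (∑ j, k j - κ)) :=
    Equiv.ofBijective σ''f (Finite.injective_iff_bijective.mp hinj'') with hσ''Edef
  refine ⟨k', hle, hκs, σ'E, σ''E, ?_, ?_, ?_⟩
  · -- σ' is a k'-shuffle
    intro i y1 y2 h1 h2 h3
    rw [blockStart_eq] at h1 h3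
    have hs1 : (y1 : ℕ) = bS k' (i:ℕ) + ((y1:ℕ) - bS k' (i:ℕ)) := by omega
    have hs2 : (y2 : ℕ) = bS k' (i:ℕ) + ((y2:ℕ) - bS k' (i:ℕ)) := by omega
    have hs1k : (y1:ℕ) - bS k' (i:ℕ) < k' i := by omega
    have hs2k : (y2:ℕ) - bS k' (i:ℕ) < k' i := by omega
    have hpi1 : pi y1 = i := idx_unique k' (hpr1 y1) hs1k (by have := hpr2 y1; omega)
    have hpi2 : pi y2 = i := idx_unique k' (hpr1 y2) hs2k (by have := hpr2 y2; omega)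
    have hpv1 : pr y1 = (y1:ℕ) - bS k' (i:ℕ) := by
      have := hpr2 y1; rw [hpi1] at this; omega
    have hpv2 : pr y2 = (y2:ℕ) - bS k' (i:ℕ) := by
      have := hpr2 y2; rw [hpi2] at this; omega
    have e1 : bS k ((pi y1 : Fin n) : ℕ) + pr y1 = bS k (i:ℕ) + ((y1:ℕ) - bS k' (i:ℕ)) := by
      rw [hpi1, hpv1]
    have e2 : bS k ((pi y2 : Fin n) : ℕ) + pr y2 = bS k (i:ℕ) + ((y2:ℕ) - bS k' (i:ℕ)) := by
      rw [hpi2, hpv2]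
    have hσlt := hσb i ⟨bS k ((pi y1 : Fin n) : ℕ) + pr y1, hA y1⟩
      ⟨bS k ((pi y2 : Fin n) : ℕ) + pr y2, hA y2⟩
      (by simp only [Fin.val_mk]; omega) (by simp only [Fin.val_mk]; omega)
      (by simp only [Fin.val_mk]; have := hle i; omega)
    rw [Fin.lt_def] at hσlt ⊢
    rw [hσ'app y1, hσ'app y2]
    simp only [hσ'fdef, Fin.val_mk] at hσlt ⊢
    omega
  · -- σ'' is a (k-k')-shuffle
    intro i z1 z2 h1 h2 h3
    rw [blockStart_eq] at h1 h3
    have hki : (fun j => k j - k' j) i = k i - k' i := rfl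
    rw [hki] at h3
    have ht1 : (z1 : ℕ) = bS (fun j => k j - k' j) (i:ℕ) + ((z1:ℕ) - bS (fun j => k j - k' j) (i:ℕ)) := by omega
    have ht2 : (z2 : ℕ) = bS (fun j => k j - k' j) (i:ℕ) + ((z2:ℕ) - bS (fun j => k j - k' j) (i:ℕ)) := by omega
    have ht1k : (z1:ℕ) - bS (fun j => k j - k' j) (i:ℕ) < k i - k' i := by omega
    have ht2k : (z2:ℕ) - bS (fun j => k j - k' j) (i:ℕ) < k i - k' i := by omega
    have hqi1 : qi z1 = i := idx_unique (fun j => k j - k' j) (hqt1 z1) ht1k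
      (by have := hqt2 z1; omega)
    have hqi2 : qi z2 = i := idx_unique (fun j => k j - k' j) (hqt1 z2) ht2k
      (by have := hqt2 z2; omega)
    have hqv1 : qt z1 = (z1:ℕ) - bS (fun j => k j - k' j) (i:ℕ) := by
      have := hqt2 z1; rw [hqi1] at this; omega
    have hqv2 : qt z2 = (z2:ℕ) - bS (fun j => k j - k' j) (i:ℕ) := by
      have := hqt2 z2; rw [hqi2] at this; omega
    have e1 : bS k ((qi z1 : Fin n) : ℕ) + (k' (qi z1) + qt z1)
        = bS k (i:ℕ) + (k' i + qt z1) := by rw [hqi1]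
    have e2 : bS k ((qi z2 : Fin n) : ℕ) + (k' (qi z2) + qt z2)
        = bS k (i:ℕ) + (k' i + qt z2) := by rw [hqi2]
    have hσlt := hσb i ⟨bS k ((qi z1 : Fin n) : ℕ) + (k' (qi z1) + qt z1), hB z1⟩
      ⟨bS k ((qi z2 : Fin n) : ℕ) + (k' (qi z2) + qt z2), hB z2⟩
      (by simp only [Fin.val_mk]; omega) (by simp only [Fin.val_mk]; omega)
      (by simp only [Fin.val_mk]; have := hle i; omega)
    rw [Fin.lt_def] at hσlt ⊢
    have hB1 := hBv z1
    have hB2 := hBv z2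
    show (σ''f z1 : ℕ) < (σ''f z2 : ℕ)
    simp only [hσ''fdef, Fin.val_mk] at hσlt hB1 hB2 ⊢
    omega
  · -- the composite equals σ
    intro τ hτ'
    apply Equiv.ext
    intro x
    obtain ⟨i, r, hr, hx⟩ := exists_part k x.2
    apply Fin.ext
    by_cases hrk' : r < k' i
    · obtain ⟨hb, he⟩ := comp_char_lt hle hκs hκ τ hτ' σ'E σ''E i r x hx hrk'
      rw [he]
      set y : Fin κ := ⟨bS k' (i:ℕ) + r, hb⟩ with hydef
      have hpiy : pi y = i := idx_unique k' (hpr1 y) hrk' (by have := hpr2 y; have : (y:ℕ) = bS k' (i:ℕ) + r := rfl; omega)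
      have hpry : pr y = r := by
        have h5 := hpr2 y
        rw [hpiy] at h5
        have : (y:ℕ) = bS k' (i:ℕ) + r := rfl
        omega
      have hxeq : (⟨bS k ((pi y : Fin n) : ℕ) + pr y, hA y⟩ : Fin (∑ j, k j)) = x := by
        apply Fin.ext
        simp only [Fin.val_mk]
        rw [hpiy, hpry]
        omega
      show (σ'f y : ℕ) = (σ x : ℕ)
      simp only [hσ'fdef, Fin.val_mk]
      rw [hxeq]
    · obtain ⟨hb, he⟩ := comp_char_ge hle hκs hκ τ hτ' σ'E σ''E i r x hx hr (by omega)
      rw [he]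
      set z : Fin (∑ j, k j - κ) := ⟨bS (fun j => k j - k' j) (i:ℕ) + (r - k' i), hb⟩ with hzdef
      have hrk : r - k' i < k i - k' i := by have := hle i; omega
      have hqiz : qi z = i := idx_unique (fun j => k j - k' j) (hqt1 z) hrk
        (by have := hqt2 z; have : (z:ℕ) = bS (fun j => k j - k' j) (i:ℕ) + (r - k' i) := rfl; omega)
      have hqtz : qt z = r - k' i := by
        have h5 := hqt2 z
        rw [hqiz] at h5
        have : (z:ℕ) = bS (fun j => k j - k' j) (i:ℕ) + (r - k' i) := rfl
        omega
      have hxeq : (⟨bS k ((qi z : Fin n) : ℕ) + (k' (qi z) + qt z), hB z⟩ : Fin (∑ j, k j)) = x := by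
        apply Fin.ext
        simp only [Fin.val_mk]
        rw [hqiz, hqtz]
        omega
      have hgeκ : κ ≤ (σ x : ℕ) := by
        have := hBv z
        rw [hxeq] at this
        exact this
      have hzval : (σ''E z : ℕ) = (σ x : ℕ) - κ := by
        show (σ''f z : ℕ) = _
        simp only [hσ''fdef, Fin.val_mk]
        rw [hxeq]
      rw [hzval]
      omega

end Surj
end SD

/-- **Unique decomposition of shuffles.** For fixed `κ ≤ N = ∑ k i`, the assignment
`(k', σ', σ'') ↦ (σ' ⊕ σ'') ∘ τ_{k', k - k'}` is a bijection from the set of triples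
consisting of `k' ≤ k` with `∑ k' = κ`, a `k'`-shuffle `σ'` of `Fin κ` and a
`(k - k')`-shuffle `σ''` of `Fin (N - κ)`, onto the set of `k`-shuffles of `Fin N`. -/
theorem shuffle_decomposition_bijective (n : ℕ) (hn : 1 ≤ n) (k : Fin n → ℕ) (κ : ℕ)
    (hκ : κ ≤ ∑ i, k i)
    (τ : ∀ k' : Fin n → ℕ, (∀ i, k' i ≤ k i) → (∑ i, k' i) = κ →
      Equiv.Perm (Fin (∑ i, k i)))
    (hτ : ∀ k' h₁ h₂, IsBlockRearrange k k' (τ k' h₁ h₂)) :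
    Set.BijOn
      (fun t : {t : (∀ i : Fin n, Fin (k i + 1)) × Equiv.Perm (Fin κ) ×
            Equiv.Perm (Fin ((∑ i, k i) - κ)) //
            (∑ i, (t.1 i : ℕ)) = κ ∧
            IsShuffle (fun i => (t.1 i : ℕ)) t.2.1 ∧
            IsShuffle (fun i => k i - (t.1 i : ℕ)) t.2.2} =>
        sumPerm hκ t.1.2.1 t.1.2.2 *
          τ (fun i => (t.1.1 i : ℕ)) (fun i => Nat.lt_succ_iff.mp (t.1.1 i).2) t.2.1)
      Set.univ {σ : Equiv.Perm (Fin (∑ i, k i)) | IsShuffle k σ} := by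
  refine ⟨?_, ?_, ?_⟩
  · intro t _
    simp only [Set.mem_setOf_eq]
    exact SD.comp_isShuffle (fun i => Nat.lt_succ_iff.mp (t.1.1 i).2) t.2.1 hκ
      _ (hτ _ _ _) _ _ t.2.2.1 t.2.2.2
  · intro t1 _ t2 _ heq
    simp only at heq
    obtain ⟨hk, hs, hs'⟩ := SD.comp_inj
      (fun i => Nat.lt_succ_iff.mp (t1.1.1 i).2) (fun i => Nat.lt_succ_iff.mp (t2.1.1 i).2)
      t1.2.1 t2.2.1 hκ _ _ (hτ _ _ _) (hτ _ _ _) _ _ _ _ heq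
    apply Subtype.ext
    refine Prod.ext (funext fun i => Fin.ext (congrFun hk i)) (Prod.ext hs hs')
  · intro σ hσ
    obtain ⟨k', hle, hκs, σ', σ'', hsh', hsh'', hfin⟩ := SD.comp_surj hκ σ hσ
    refine ⟨⟨⟨fun i => ⟨k' i, Nat.lt_succ_of_le (hle i)⟩, σ', σ''⟩, hκs, hsh', hsh''⟩,
      Set.mem_univ _, ?_⟩
    exact hfin _ (hτ _ _ _)
end

section
/- Let n ≥ 1 and k', k'' : Fin n → ℕ, set k := k' + k'' pointwise, N := ∑_i k(i) and κ := ∑_i k'(i). Then the signature of the block-rearrangement permutation τ_{k',k''} of Fin N equals (−1)^{∑_{i} k''(i) · (∑_{j > i} k'(j))}. -/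
open Finset Equiv Equiv.Perm

namespace BRAux

variable {n : ℕ} (k : Fin n → ℕ)

lemma sum_filter_le (i : Fin n) :
    ∑ l ∈ Finset.univ.filter (fun l => l ≤ i), k l = blockStart k i + k i := by
  have h : Finset.univ.filter (fun l : Fin n => l ≤ i)
      = insert i (Finset.univ.filter (fun l => l < i)) := by
    ext l
    simp [le_iff_lt_or_eq, or_comm]
  rw [h, Finset.sum_insert (by simp), blockStart]
  ring

lemma blockStart_add_le {i j : Fin n} (h : i < j) : blockStart k i + k i ≤ blockStart k j := by
  rw [← sum_filter_le]
  apply Finset.sum_le_sum_of_subset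
  intro l hl
  simp only [mem_filter, mem_univ, true_and] at *
  exact lt_of_le_of_lt hl h

lemma blockStart_add_le_sum (i : Fin n) : blockStart k i + k i ≤ ∑ j, k j := by
  rw [← sum_filter_le]
  exact Finset.sum_le_sum_of_subset (Finset.filter_subset _ _)

lemma blockStart_le {i j : Fin n} (h : i ≤ j) : blockStart k i ≤ blockStart k j := by
  apply Finset.sum_le_sum_of_subset
  intro l hl
  simp only [mem_filter, mem_univ, true_and] at *
  exact lt_of_lt_of_le hl h

lemma block_unique {i j : Fin n} {r s : ℕ} (hr : r < k i) (hs : s < k j)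
    (h : blockStart k i + r = blockStart k j + s) : i = j ∧ r = s := by
  rcases lt_trichotomy i j with hij | hij | hij
  · have := blockStart_add_le k hij
    omega
  · subst hij; omega
  · have := blockStart_add_le k hij
    omega

lemma exists_block (hn : 1 ≤ n) (x : ℕ) (hx : x < ∑ j, k j) :
    ∃ i r, r < k i ∧ x = blockStart k i + r := by
  classical
  have h0 : blockStart k ⟨0, hn⟩ = 0 := by
    rw [blockStart, Finset.sum_eq_zero]
    intro j hj
    simp only [mem_filter, mem_univ, true_and, Fin.lt_def] at hj
    omega
  have hS : (Finset.univ.filter (fun i : Fin n => blockStart k i ≤ x)).Nonempty :=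
    ⟨⟨0, hn⟩, by simp [h0]⟩
  obtain ⟨i, hbs, hmax⟩ : ∃ i : Fin n, blockStart k i ≤ x ∧
      ∀ j : Fin n, blockStart k j ≤ x → j ≤ i := by
    refine ⟨(Finset.univ.filter (fun i : Fin n => blockStart k i ≤ x)).max' hS, ?_, ?_⟩
    · have := Finset.max'_mem _ hS
      simpa using this
    · intro j hj
      exact Finset.le_max' _ j (by simpa using hj)
  refine ⟨i, x - blockStart k i, ?_, by omega⟩
  by_contra hcon
  push_neg at hcon
  have hxk : blockStart k i + k i ≤ x := by omega
  rcases lt_or_eq_of_le (Nat.succ_le_of_lt i.isLt) with hlt | heq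
  · have hji : blockStart k (⟨i.1 + 1, hlt⟩ : Fin n) = blockStart k i + k i := by
      rw [← sum_filter_le, blockStart]
      congr 1
      ext l
      simp only [mem_filter, mem_univ, true_and, Fin.lt_def, Fin.le_def, Nat.lt_succ_iff]
    have h2 := hmax ⟨i.1 + 1, hlt⟩ (by omega)
    rw [Fin.le_def] at h2
    simp at h2
  · have hsum : ∑ j, k j = blockStart k i + k i := by
      rw [← sum_filter_le]
      refine Finset.sum_congr ?_ (fun _ _ => rfl)
      refine (Finset.filter_true_of_mem fun l _ => ?_).symm
      rw [Fin.le_def]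
      have := l.isLt
      omega
    omega

lemma my_sign_eq_signAux {m : ℕ} (f : Perm (Fin m)) : Perm.sign f = Perm.signAux f := by
  rcases lt_or_ge m 2 with hm | hm
  · have hs : Subsingleton (Fin m) := by
      rcases m with _ | _ | m
      · exact ⟨fun a => a.elim0⟩
      · exact ⟨fun a b => Fin.ext (by omega)⟩
      · omega
    have hf : f = 1 := Equiv.ext fun x => Subsingleton.elim _ _
    rw [hf, Perm.signAux_one, Perm.sign_one]
  · have hsurj : Function.Surjective
        (MonoidHom.mk' Perm.signAux Perm.signAux_mul : Perm (Fin m) →* ℤˣ) := by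
      intro u
      rcases Int.units_eq_one_or u with h | h
      · exact ⟨1, by simp [h, Perm.signAux_one]⟩
      · refine ⟨Equiv.swap ⟨0, by omega⟩ ⟨1, by omega⟩, ?_⟩
        have hne : (⟨0, by omega⟩ : Fin m) ≠ ⟨1, by omega⟩ := by
          simp [Fin.ext_iff]
        simp [h, Perm.signAux_swap hne]
    have := Perm.eq_sign_of_surjective_hom hsurj
    have h2 := DFunLike.congr_fun this f
    exact h2.symm

lemma prod_ite_neg_one {β : Type*} (s : Finset β) (p : β → Prop) [DecidablePred p] :
    (∏ x ∈ s, if p x then (-1 : ℤˣ) else 1) = (-1) ^ (s.filter p).card := by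
  rw [Finset.prod_ite, Finset.prod_const, Finset.prod_const, one_pow, mul_one]

end BRAux

set_option maxHeartbeats 2000000 in
theorem aux_sign (n N : ℕ) (hn : 1 ≤ n) (k' k'' : Fin n → ℕ)
    (hNdef : N = ∑ i, (k' i + k'' i))
    (τ : Equiv.Perm (Fin N))
    (hτ : IsBlockRearrange (fun i => k' i + k'' i) k' τ) :
    Equiv.Perm.sign τ =
      (-1) ^ (∑ i, k'' i * (∑ j ∈ Finset.univ.filter (fun j => i < j), k' j)) := by
  classical
  open BRAux in
  set k : Fin n → ℕ := fun i => k' i + k'' i with hk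
  have hkdef : ∀ i, k i = k' i + k'' i := fun i => rfl
  set κ : ℕ := ∑ i, k' i with hκ
  have hNκ : N = κ + ∑ i, k'' i := by
    rw [hNdef, hκ, ← Finset.sum_add_distrib]
  have hb' : ∀ i, blockStart k' i + k' i ≤ κ := fun i => BRAux.blockStart_add_le_sum k' i
  have hb'' : ∀ i, blockStart k'' i + k'' i ≤ ∑ l, k'' l :=
    fun i => BRAux.blockStart_add_le_sum k'' i
  have hbk : ∀ i, blockStart k i + k i ≤ N := fun i => hNdef ▸ BRAux.blockStart_add_le_sum k i
  have hbs'' : ∀ i, blockStart (fun j => k j - k' j) i = blockStart k'' i := by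
    intro i
    unfold blockStart
    exact Finset.sum_congr rfl fun j _ => by simp [hkdef]
  have hprime : ∀ (i : Fin n) (r : ℕ) (x : Fin N), (x : ℕ) = blockStart k i + r →
      r < k' i → (τ x : ℕ) = blockStart k' i + r := by
    intro i r x hx hr
    exact (hτ i r x hx (by have := hkdef i; omega)).1 hr
  have hdbl : ∀ (i : Fin n) (r : ℕ) (x : Fin N), (x : ℕ) = blockStart k i + r →
      r < k i → k' i ≤ r → (τ x : ℕ) = κ + blockStart k'' i + (r - k' i) := by
    intro i r x hx hrk hr
    have h2 := (hτ i r x hx hrk).2 hr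
    rw [hbs''] at h2
    omega
  -- the source finset of quadruples
  set T : Finset (Σ _ : Fin n, Σ _ : Fin n, ℕ × ℕ) :=
    Finset.univ.sigma (fun i : Fin n => (Finset.univ.filter (fun j => i < j)).sigma
      (fun j => Finset.range (k'' i) ×ˢ Finset.range (k' j))) with hT
  have hmemT : ∀ a ∈ T, a.1 < a.2.1 ∧ a.2.2.1 < k'' a.1 ∧ a.2.2.2 < k' a.2.1 := by
    intro a ha
    simp only [hT, Finset.mem_sigma, Finset.mem_filter, Finset.mem_product,
      Finset.mem_range, Finset.mem_univ, true_and] at ha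
    exact ⟨ha.1, ha.2.1, ha.2.2⟩
  have hxb : ∀ a ∈ T, blockStart k a.2.1 + a.2.2.2 < N := by
    intro a ha
    obtain ⟨_, _, hq⟩ := hmemT a ha
    have := hbk a.2.1
    have := hkdef a.2.1
    omega
  have hyb : ∀ a ∈ T, blockStart k a.1 + (k' a.1 + a.2.2.1) < N := by
    intro a ha
    obtain ⟨_, hp, _⟩ := hmemT a ha
    have := hbk a.1
    have := hkdef a.1
    omega
  have hcardT : T.card = ∑ i, k'' i * (∑ j ∈ Finset.univ.filter (fun j => i < j), k' j) := by
    rw [hT, Finset.card_sigma]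
    refine Finset.sum_congr rfl fun i _ => ?_
    rw [Finset.card_sigma, Finset.mul_sum]
    exact Finset.sum_congr rfl fun j _ => by
      rw [Finset.card_product, Finset.card_range, Finset.card_range]
  have hcard : ((Equiv.Perm.finPairsLT N).filter fun x => τ x.1 ≤ τ x.2).card
      = ∑ i, k'' i * (∑ j ∈ Finset.univ.filter (fun j => i < j), k' j) := by
    rw [← hcardT]
    refine (Finset.card_bij
      (fun a ha => (⟨⟨blockStart k a.2.1 + a.2.2.2, hxb a ha⟩,
        ⟨blockStart k a.1 + (k' a.1 + a.2.2.1), hyb a ha⟩⟩ : Σ _ : Fin N, Fin N))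
      ?_ ?_ ?_).symm
    · -- maps into the inversion set
      intro a ha
      obtain ⟨hij, hp, hq⟩ := hmemT a ha
      rw [Finset.mem_filter, Equiv.Perm.mem_finPairsLT]
      dsimp only
      have h1 := BRAux.blockStart_add_le k hij
      have h2 := hkdef a.1
      constructor
      · rw [Fin.lt_def]
        simp only
        omega
      · have hτx := hprime a.2.1 a.2.2.2 ⟨blockStart k a.2.1 + a.2.2.2, hxb a ha⟩ rfl hq
        have hτy := hdbl a.1 (k' a.1 + a.2.2.1)
          ⟨blockStart k a.1 + (k' a.1 + a.2.2.1), hyb a ha⟩ rfl (by omega) (Nat.le_add_right _ _)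
        rw [Fin.le_def]
        have := hb' a.2.1
        omega
    · -- injective
      rintro ⟨i, j, p, q⟩ ha ⟨i', j', p', q'⟩ hb h
      obtain ⟨hij, hp, hq⟩ := hmemT _ ha
      obtain ⟨hij', hp', hq'⟩ := hmemT _ hb
      dsimp only at hij hp hq hij' hp' hq'
      dsimp only at h
      rw [Sigma.ext_iff] at h
      obtain ⟨h1, h2⟩ := h
      rw [heq_eq_eq] at h2
      rw [Fin.ext_iff] at h1 h2
      dsimp only at h1 h2
      obtain ⟨hj, hq2⟩ := BRAux.block_unique k
        (show (q : ℕ) < k j by have := hkdef j; omega)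
        (show (q' : ℕ) < k j' by have := hkdef j'; omega) h1
      obtain ⟨hi, hp2⟩ := BRAux.block_unique k
        (show k' i + p < k i by have := hkdef i; omega)
        (show k' i' + p' < k i' by have := hkdef i'; omega) h2
      subst hi
      subst hj
      have hp3 : p = p' := by omega
      subst hp3
      subst hq2
      rfl
    · -- surjective
      rintro ⟨xa, yb⟩ hb
      rw [Finset.mem_filter, Equiv.Perm.mem_finPairsLT] at hb
      dsimp only at hb
      obtain ⟨hlt, hle⟩ := hb
      rw [Fin.lt_def] at hlt
      rw [Fin.le_def] at hle
      obtain ⟨j, s, hs, hxval⟩ := BRAux.exists_block k hn xa.1 (hNdef ▸ xa.isLt)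
      obtain ⟨i, r, hr, hyval⟩ := BRAux.exists_block k hn yb.1 (hNdef ▸ yb.isLt)
      -- step 1 : k' i ≤ r
      have step1 : k' i ≤ r := by
        by_contra hcon
        push_neg at hcon
        have hτy := hprime i r yb hyval hcon
        rcases lt_or_ge (s : ℕ) (k' j) with hsj | hsj
        · have hτx := hprime j s xa hxval hsj
          rcases lt_trichotomy i j with h | h | h
          · have := BRAux.blockStart_add_le k' h
            omega
          · subst h
            omega
          · have := BRAux.blockStart_add_le k h
            omega
        · have hτx := hdbl j s xa hxval hs hsj
          have := hb' i
          omega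
      -- step 2 : s < k' j
      have step2 : s < k' j := by
        by_contra hcon
        push_neg at hcon
        have hτy := hdbl i r yb hyval hr step1
        have hτx := hdbl j s xa hxval hs hcon
        rcases lt_trichotomy i j with h | h | h
        · have := BRAux.blockStart_add_le k'' h
          have := hkdef i
          omega
        · subst h
          omega
        · have := BRAux.blockStart_add_le k h
          omega
      -- step 3 : i < j
      have step3 : i < j := by
        rcases lt_trichotomy i j with h | h | h
        · exact h
        · subst h
          omega
        · have := BRAux.blockStart_add_le k h
          omega
      refine ⟨⟨i, j, (r - k' i, s)⟩, ?_, ?_⟩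
      · simp only [hT, Finset.mem_sigma, Finset.mem_filter, Finset.mem_product,
          Finset.mem_range, Finset.mem_univ, true_and]
        have := hkdef i
        exact ⟨step3, by omega, step2⟩
      · rw [Sigma.ext_iff, heq_eq_eq]
        constructor
        · apply Fin.ext
          simp only
          omega
        · apply Fin.ext
          simp only
          omega
  rw [BRAux.my_sign_eq_signAux]
  unfold Equiv.Perm.signAux
  rw [BRAux.prod_ite_neg_one, hcard]


/-- **Signature of the block-rearrangement permutation.** If `k = k' + k''` pointwise and
`τ` is the block-rearrangement permutation of `Fin (∑ i, k i)` determined by `k'` and `k''`,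
then `sgn τ = (−1)^{∑ᵢ k''ᵢ · (∑_{j>i} k'ⱼ)}`. -/
theorem sign_blockRearrange (n : ℕ) (hn : 1 ≤ n) (k' k'' : Fin n → ℕ)
    (τ : Equiv.Perm (Fin (∑ i, (k' i + k'' i))))
    (hτ : IsBlockRearrange (fun i => k' i + k'' i) k' τ) :
    Equiv.Perm.sign τ =
      (-1) ^ (∑ i, k'' i * (∑ j ∈ Finset.univ.filter (fun j => i < j), k' j)) := by
  exact aux_sign n _ hn k' k'' rfl τ hτ
end

section
/- Let m ≥ 1, let U ⊆ (Fin m → ℝ) be an open set, and let c : (Fin m →₀ ℕ) → ((Fin m → ℝ) → ℝ) be a family of functions such that each c_α is infinitely differentiable on U. Then the following two conditions are equivalent: (a) for every multi-index α, every i ∈ Fin m, and every u ∈ U, the partial derivative of c_α at u in the direction of the i-th standard basis vector equals (α(i) + 1) · c_{α + e_i}(u); (b) for every multi-index α and every u ∈ U, α! · c_α(u) = ∂^α c_0(u), where ∂^α c_0 denotes the iterated partial derivative of c_0 obtained by differentiating α(i) times in the i-th coordinate direction for each i (the order being immaterial by smoothness). -/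
/-- The partial derivative of `f : (Fin m → ℝ) → ℝ` in the direction of the `i`-th standard
basis vector. -/
noncomputable def pderivAt {m : ℕ} (i : Fin m) (f : (Fin m → ℝ) → ℝ) :
    (Fin m → ℝ) → ℝ :=
  fun u => fderiv ℝ f u (Pi.single i 1)

/-- Iterated partial derivatives along a list of coordinate directions. -/
noncomputable def iterPDeriv {m : ℕ} : List (Fin m) → ((Fin m → ℝ) → ℝ) → (Fin m → ℝ) → ℝ
  | [], f => f
  | i :: l, f => iterPDeriv l (pderivAt i f)

/-- The list of coordinate directions associated to a multi-index `α`: each `i : Fin m`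
repeated `α i` times, so that `iterPDeriv (multiIndexList α) f = ∂^α f`. -/
def multiIndexList {m : ℕ} (α : Fin m →₀ ℕ) : List (Fin m) :=
  (List.finRange m).flatMap fun i => List.replicate (α i) i

section Aux

variable {m : ℕ} {U : Set (Fin m → ℝ)}

lemma contDiffOn_pderivAt (hU : IsOpen U) {f : (Fin m → ℝ) → ℝ}
    (hf : ContDiffOn ℝ ((⊤ : ℕ∞) : WithTop ℕ∞) f U) (i : Fin m) :
    ContDiffOn ℝ ((⊤ : ℕ∞) : WithTop ℕ∞) (pderivAt i f) U :=
  (hf.fderiv_of_isOpen hU (le_of_eq ENat.coe_top_add_one)).clm_apply contDiffOn_const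

lemma contDiffOn_iterPDeriv (hU : IsOpen U) :
    ∀ (l : List (Fin m)) {f : (Fin m → ℝ) → ℝ},
      ContDiffOn ℝ ((⊤ : ℕ∞) : WithTop ℕ∞) f U →
      ContDiffOn ℝ ((⊤ : ℕ∞) : WithTop ℕ∞) (iterPDeriv l f) U
  | [], _, hf => hf
  | i :: l, _, hf => contDiffOn_iterPDeriv hU l (contDiffOn_pderivAt hU hf i)

lemma pderivAt_congr (hU : IsOpen U) {f g : (Fin m → ℝ) → ℝ} (h : Set.EqOn f g U)
    (i : Fin m) {u : Fin m → ℝ} (hu : u ∈ U) : pderivAt i f u = pderivAt i g u := by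
  unfold pderivAt
  rw [Filter.EventuallyEq.fderiv_eq (Filter.eventuallyEq_of_mem (hU.mem_nhds hu) h)]

lemma iterPDeriv_congr (hU : IsOpen U) :
    ∀ (l : List (Fin m)) {f g : (Fin m → ℝ) → ℝ}, Set.EqOn f g U →
      ∀ u ∈ U, iterPDeriv l f u = iterPDeriv l g u
  | [], _, _, h, u, hu => h hu
  | i :: l, f, g, h, u, hu =>
    iterPDeriv_congr hU l (fun _ hx => pderivAt_congr hU h i hx) u hu

lemma iterPDeriv_const_mul (hU : IsOpen U) (r : ℝ) :
    ∀ (l : List (Fin m)) {f : (Fin m → ℝ) → ℝ},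
      ContDiffOn ℝ ((⊤ : ℕ∞) : WithTop ℕ∞) f U →
      ∀ u ∈ U, iterPDeriv l (fun x => r * f x) u = r * iterPDeriv l f u := by
  intro l
  induction l with
  | nil => intro f _ u _; rfl
  | cons i l ih =>
    intro f hf u hu
    have h1 : Set.EqOn (pderivAt i (fun x => r * f x)) (fun x => r * pderivAt i f x) U := by
      intro x hx
      have hdf : DifferentiableAt ℝ f x :=
        ((hf.differentiableOn (by simp)) x hx).differentiableAt (hU.mem_nhds hx)
      simp only [pderivAt, fderiv_const_mul hdf r]
      rfl
    show iterPDeriv l (pderivAt i fun x => r * f x) u = r * iterPDeriv l (pderivAt i f) u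
    rw [iterPDeriv_congr hU l h1 u hu]
    exact ih (contDiffOn_pderivAt hU hf i) u hu

lemma pderivAt_swap (hU : IsOpen U) {f : (Fin m → ℝ) → ℝ}
    (hf : ContDiffOn ℝ ((⊤ : ℕ∞) : WithTop ℕ∞) f U) (i j : Fin m)
    {u : Fin m → ℝ} (hu : u ∈ U) :
    pderivAt i (pderivAt j f) u = pderivAt j (pderivAt i f) u := by
  have hF : ContDiffOn ℝ ((⊤ : ℕ∞) : WithTop ℕ∞) (fderiv ℝ f) U :=
    hf.fderiv_of_isOpen hU (le_of_eq ENat.coe_top_add_one)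
  have hdF : DifferentiableAt ℝ (fderiv ℝ f) u :=
    ((hF.differentiableOn (by simp)) u hu).differentiableAt (hU.mem_nhds hu)
  have key : ∀ v w : Fin m → ℝ,
      fderiv ℝ (fun x => fderiv ℝ f x v) u w = fderiv ℝ (fderiv ℝ f) u w v := by
    intro v w
    rw [fderiv_clm_apply hdF (differentiableAt_const v)]
    simp
  have hsymm : IsSymmSndFDerivAt ℝ f u :=
    ((hf u hu).contDiffAt (hU.mem_nhds hu)).isSymmSndFDerivAt
      (by rw [minSmoothness_of_isRCLikeNormedField]; exact WithTop.coe_le_coe.2 (le_top : (2 : ℕ∞) ≤ ⊤))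
  show fderiv ℝ (fun x => fderiv ℝ f x (Pi.single j 1)) u (Pi.single i 1)
      = fderiv ℝ (fun x => fderiv ℝ f x (Pi.single i 1)) u (Pi.single j 1)
  rw [key, key]
  exact hsymm _ _

lemma iterPDeriv_perm (hU : IsOpen U) {l l' : List (Fin m)} (h : l.Perm l') :
    ∀ {f : (Fin m → ℝ) → ℝ}, ContDiffOn ℝ ((⊤ : ℕ∞) : WithTop ℕ∞) f U →
      ∀ u ∈ U, iterPDeriv l f u = iterPDeriv l' f u := by
  induction h with
  | nil => intro f _ u _; rfl
  | cons i _ ih => intro f hf u hu; exact ih (contDiffOn_pderivAt hU hf i) u hu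
  | swap i j l =>
    intro f hf u hu
    show iterPDeriv l (pderivAt i (pderivAt j f)) u = iterPDeriv l (pderivAt j (pderivAt i f)) u
    exact iterPDeriv_congr hU l (fun x hx => pderivAt_swap hU hf i j hx) u hu
  | trans h1 h2 ih1 ih2 =>
    intro f hf u hu
    rw [ih1 hf u hu, ih2 hf u hu]

lemma iterPDeriv_append_single :
    ∀ (l : List (Fin m)) (i : Fin m) (f : (Fin m → ℝ) → ℝ),
      iterPDeriv (l ++ [i]) f = pderivAt i (iterPDeriv l f)
  | [], _, _ => rfl
  | a :: l, i, f => iterPDeriv_append_single l i (pderivAt a f)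

lemma count_multiIndexList (α : Fin m →₀ ℕ) (i : Fin m) :
    (multiIndexList α).count i = α i := by
  unfold multiIndexList
  rw [List.count_flatMap, ← Fin.sum_univ_def]
  simp [List.count_replicate, Finset.sum_ite_eq]

/-- The multi-index of counts of a list. -/
noncomputable def listMulti (l : List (Fin m)) : Fin m →₀ ℕ :=
  l.foldr (fun i s => s + Finsupp.single i 1) 0

lemma listMulti_cons (i : Fin m) (l : List (Fin m)) :
    listMulti (i :: l) = listMulti l + Finsupp.single i 1 := rfl

lemma listMulti_apply : ∀ (l : List (Fin m)) (a : Fin m), listMulti l a = l.count a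
  | [], a => by simp [listMulti]
  | i :: l, a => by
    rw [listMulti_cons, Finsupp.add_apply, listMulti_apply l a, Finsupp.single_apply,
      List.count_cons]
    rcases eq_or_ne a i with rfl | h
    · simp
    · simp [h, Ne.symm h]

lemma multi_fact_succ (α : Fin m →₀ ℕ) (i : Fin m) :
    (∏ j, ((α + Finsupp.single i 1 : Fin m →₀ ℕ) j).factorial)
      = (α i + 1) * ∏ j, (α j).factorial := by
  have h : ∀ j : Fin m, ((α + Finsupp.single i 1 : Fin m →₀ ℕ) j).factorial
      = (if j = i then α i + 1 else 1) * (α j).factorial := by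
    intro j
    rw [Finsupp.add_apply, Finsupp.single_apply]
    rcases eq_or_ne j i with rfl | hj
    · simp [Nat.factorial_succ]
    · simp [hj, Ne.symm hj]
  rw [Finset.prod_congr rfl fun j _ => h j, Finset.prod_mul_distrib,
    Finset.prod_ite_eq' Finset.univ i (fun _ => α i + 1)]
  simp

lemma perm_multiIndexList_append (α : Fin m →₀ ℕ) (i : Fin m) :
    (multiIndexList α ++ [i]).Perm (multiIndexList (α + Finsupp.single i 1)) := by
  rw [List.perm_iff_count]
  intro a
  rw [List.count_append, count_multiIndexList, count_multiIndexList, Finsupp.add_apply,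
    Finsupp.single_apply]
  rcases eq_or_ne a i with rfl | h
  · simp
  · simp [h, Ne.symm h]

end Aux

section Main

variable {m : ℕ} {U : Set (Fin m → ℝ)}

lemma multi_fact_succ_real (α : Fin m →₀ ℕ) (i : Fin m) :
    (∏ j, (((α + Finsupp.single i 1 : Fin m →₀ ℕ) j).factorial : ℝ))
      = ((α i : ℝ) + 1) * ∏ j, ((α j).factorial : ℝ) := by
  rw [← Nat.cast_prod, ← Nat.cast_prod, multi_fact_succ]
  push_cast
  ring

end Main

/-- **Flatness equals Taylor expansion.** Let `U ⊆ ℝ^m` be open and `c` a family of smooth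
functions on `U` indexed by multi-indices. Then the system of equations
`∂ᵢ c_α = (α i + 1) · c_{α + eᵢ}` on `U` holds iff for every multi-index `α` one has
`α! · c_α = ∂^α c_0` on `U`. -/
theorem flat_iff_taylor (m : ℕ) (hm : 1 ≤ m) (U : Set (Fin m → ℝ)) (hU : IsOpen U)
    (c : (Fin m →₀ ℕ) → (Fin m → ℝ) → ℝ)
    (hc : ∀ α, ContDiffOn ℝ (⊤ : ℕ∞) (c α) U) :
    (∀ (α : Fin m →₀ ℕ) (i : Fin m), ∀ u ∈ U,
        fderiv ℝ (c α) u (Pi.single i 1) = ((α i : ℝ) + 1) * c (α + Finsupp.single i 1) u)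
      ↔
    (∀ α : Fin m →₀ ℕ, ∀ u ∈ U,
        (∏ i, ((α i).factorial : ℝ)) * c α u = iterPDeriv (multiIndexList α) (c 0) u) := by
  have hc' : ∀ α, ContDiffOn ℝ ((⊤ : ℕ∞) : WithTop ℕ∞) (c α) U :=
    fun α => (hc α).of_le (by simp)
  constructor
  · intro ha
    have key : ∀ (l : List (Fin m)) (β : Fin m →₀ ℕ), ∀ u ∈ U,
        (∏ j, ((β j).factorial : ℝ)) * iterPDeriv l (c β) u =
        (∏ j, (((β + listMulti l : Fin m →₀ ℕ) j).factorial : ℝ)) * c (β + listMulti l) u := by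
      intro l
      induction l with
      | nil => intro β u hu; simp [listMulti, iterPDeriv]
      | cons i l ih =>
        intro β u hu
        have h1 : Set.EqOn (pderivAt i (c β))
            (fun x => ((β i : ℝ) + 1) * c (β + Finsupp.single i 1) x) U :=
          fun x hx => ha β i x hx
        have harr : β + Finsupp.single i 1 + listMulti l = β + listMulti (i :: l) := by
          rw [listMulti_cons, add_assoc, add_comm (Finsupp.single i 1)]
        show (∏ j, ((β j).factorial : ℝ)) * iterPDeriv l (pderivAt i (c β)) u = _
        rw [iterPDeriv_congr hU l h1 u hu, iterPDeriv_const_mul hU _ l (hc' _) u hu,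
          show (∏ j, ((β j).factorial : ℝ)) *
              (((β i : ℝ) + 1) * iterPDeriv l (c (β + Finsupp.single i 1)) u)
            = (∏ j, (((β + Finsupp.single i 1 : Fin m →₀ ℕ) j).factorial : ℝ)) *
              iterPDeriv l (c (β + Finsupp.single i 1)) u from by
            rw [multi_fact_succ_real]; ring,
          ih (β + Finsupp.single i 1) u hu, harr]
    intro α u hu
    have h0 : (0 : Fin m →₀ ℕ) + listMulti (multiIndexList α) = α := by
      ext j
      simp [listMulti_apply, count_multiIndexList]
    have hk := key (multiIndexList α) 0 u hu
    rw [h0] at hk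
    simpa using hk.symm
  · intro hb α i u hu
    have hfac_ne : (∏ j, ((α j).factorial : ℝ)) ≠ 0 :=
      ne_of_gt (Finset.prod_pos fun j _ => by exact_mod_cast (α j).factorial_pos)
    have hD : ContDiffOn ℝ ((⊤ : ℕ∞) : WithTop ℕ∞) (iterPDeriv (multiIndexList α) (c 0)) U :=
      contDiffOn_iterPDeriv hU _ (hc' 0)
    have hDdiff : DifferentiableAt ℝ (iterPDeriv (multiIndexList α) (c 0)) u :=
      ((hD.differentiableOn (by simp)) u hu).differentiableAt
        (hU.mem_nhds hu)
    have heq : Set.EqOn (c α)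
        (fun x => (∏ j, ((α j).factorial : ℝ))⁻¹ * iterPDeriv (multiIndexList α) (c 0) x) U := by
      intro x hx
      show c α x = (∏ j, ((α j).factorial : ℝ))⁻¹ * iterPDeriv (multiIndexList α) (c 0) x
      rw [← hb α x hx, inv_mul_cancel_left₀ hfac_ne]
    rw [Filter.EventuallyEq.fderiv_eq (Filter.eventuallyEq_of_mem (hU.mem_nhds hu) heq),
      fderiv_const_mul hDdiff, ContinuousLinearMap.smul_apply]
    have h2 : fderiv ℝ (iterPDeriv (multiIndexList α) (c 0)) u (Pi.single i 1)
        = iterPDeriv (multiIndexList (α + Finsupp.single i 1)) (c 0) u := by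
      show pderivAt i (iterPDeriv (multiIndexList α) (c 0)) u = _
      rw [← iterPDeriv_append_single (multiIndexList α) i (c 0)]
      exact iterPDeriv_perm hU (perm_multiIndexList_append α i) (hc' 0) u hu
    rw [h2, ← hb (α + Finsupp.single i 1) u hu, multi_fact_succ_real]
    field_simp
    linear_combination ((α i : ℝ) * c (α + Finsupp.single i 1) u + c (α + Finsupp.single i 1) u) * mul_inv_cancel₀ hfac_ne
end
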